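/- arXiv:1304.7471 — 6 statements merged into one kernel-verified Lean document; each statement's English description precedes it below -/
import Mathlib

section
/- Let n be prime and k ≥ 1, and let A*_k be the family of all A ⊆ [n] with |A| = ⌊n/2⌋ such that Σ_{i∈A} i^d ≡ 0 (mod n) for all 1 ≤ d ≤ k. Then A*_k contains no two sets A, B with |A \ B| = k. -/
open Finset in
lemma newton_multiset {F : Type*} [CommRing F] (s : Multiset F) (j : ℕ) :
    (j : F) * s.esymm j = (-1) ^ (j + 1) *
      ∑ a ∈ (Finset.HasAntidiagonal.antidiagonal j).filter (fun a => a.1 < j),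
        (-1) ^ a.1 * s.esymm a.1 * (s.map (· ^ a.2)).sum := by
  set f : Fin s.toList.length → F := s.toList.get with hfdef
  have hf : (Finset.univ.val.map f) = s := by
    rw [Fin.univ_val_map, hfdef, List.ofFn_get, Multiset.coe_toList]
  have h := congrArg (MvPolynomial.aeval f)
    (MvPolynomial.mul_esymm_eq_sum (Fin s.toList.length) F j)
  simp only [map_mul, map_sum, map_pow, map_neg, map_one, map_natCast,
    MvPolynomial.aeval_esymm_eq_multiset_esymm, MvPolynomial.psum, MvPolynomial.aeval_X, hf] at h
  convert h using 3 with a ha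
  rw [show (∑ x : Fin s.toList.length, f x ^ a.2)
      = ((Finset.univ.val.map f).map (· ^ a.2)).sum from by
        rw [Multiset.map_map]; rfl, hf]

lemma multiset_eq_of_psum_eq {F : Type*} [Field F] (k : ℕ) (s t : Multiset F)
    (hcs : Multiset.card s = k) (hct : Multiset.card t = k)
    (hchar : ∀ j, 1 ≤ j → j ≤ k → (j : F) ≠ 0)
    (hp : ∀ d, 1 ≤ d → d ≤ k → (s.map (· ^ d)).sum = (t.map (· ^ d)).sum) : s = t := by
  have he : ∀ j, j ≤ k → s.esymm j = t.esymm j := by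
    intro j
    induction j using Nat.strong_induction_on with
    | _ j ih =>
      intro hjk
      rcases Nat.eq_zero_or_pos j with h0 | h1
      · subst h0; simp [Multiset.esymm]
      · apply mul_left_cancel₀ (hchar j h1 hjk)
        rw [newton_multiset s j, newton_multiset t j]
        congr 1
        refine Finset.sum_congr rfl fun a ha => ?_
        simp only [Finset.mem_filter, Finset.HasAntidiagonal.mem_antidiagonal] at ha
        rw [ih a.1 ha.2 (by omega), hp a.2 (by omega) (by omega)]
  have hprod : (s.map fun a => Polynomial.X - Polynomial.C a).prod
      = (t.map fun a => Polynomial.X - Polynomial.C a).prod := by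
    ext i
    rcases le_or_gt i k with hik | hik
    · rw [Multiset.prod_X_sub_C_coeff s (by omega), Multiset.prod_X_sub_C_coeff t (by omega),
        hcs, hct, he _ (by omega)]
    · rw [Polynomial.coeff_eq_zero_of_natDegree_lt, Polynomial.coeff_eq_zero_of_natDegree_lt]
      · refine lt_of_le_of_lt (Polynomial.natDegree_multiset_prod_le _) ?_
        calc ((t.map fun a => Polynomial.X - Polynomial.C a).map Polynomial.natDegree).sum
            ≤ Multiset.card t * 1 := by
              have := Multiset.sum_le_card_nsmul
                ((t.map fun a => Polynomial.X - Polynomial.C a).map Polynomial.natDegree) 1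
                (fun x hx => by
                  obtain ⟨p, hp2, rfl⟩ := Multiset.mem_map.mp hx
                  obtain ⟨a, _, rfl⟩ := Multiset.mem_map.mp hp2
                  exact Polynomial.natDegree_X_sub_C_le a)
              simpa using this
          _ < i := by simpa [hct] using hik
      · refine lt_of_le_of_lt (Polynomial.natDegree_multiset_prod_le _) ?_
        calc ((s.map fun a => Polynomial.X - Polynomial.C a).map Polynomial.natDegree).sum
            ≤ Multiset.card s * 1 := by
              have := Multiset.sum_le_card_nsmul
                ((s.map fun a => Polynomial.X - Polynomial.C a).map Polynomial.natDegree) 1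
                (fun x hx => by
                  obtain ⟨p, hp2, rfl⟩ := Multiset.mem_map.mp hx
                  obtain ⟨a, _, rfl⟩ := Multiset.mem_map.mp hp2
                  exact Polynomial.natDegree_X_sub_C_le a)
              simpa using this
          _ < i := by simpa [hcs] using hik
  calc s = (s.map fun a => Polynomial.X - Polynomial.C a).prod.roots :=
        (Polynomial.roots_multiset_prod_X_sub_C s).symm
    _ = (t.map fun a => Polynomial.X - Polynomial.C a).prod.roots := by rw [hprod]
    _ = t := Polynomial.roots_multiset_prod_X_sub_C t

open Classical in
theorem stmt_4 (n k : ℕ) (hn : n.Prime) (hk : 1 ≤ k)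
    (𝒜star : Finset (Finset ℕ))
    (h𝒜 : 𝒜star = ((Finset.Icc 1 n).powersetCard (n / 2)).filter
      (fun A => ∀ d ∈ Finset.Icc 1 k, (∑ i ∈ A, i ^ d) % n = 0)) :
    ∀ A ∈ 𝒜star, ∀ B ∈ 𝒜star, (A \ B).card ≠ k := by
  subst h𝒜
  intro A hA B hB hcard
  haveI := Fact.mk hn
  simp only [Finset.mem_filter, Finset.mem_powersetCard] at hA hB
  obtain ⟨⟨hAsub, hAcard⟩, hApow⟩ := hA
  obtain ⟨⟨hBsub, hBcard⟩, hBpow⟩ := hB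
  have hn2 : 2 ≤ n := hn.two_le
  have hkA : k ≤ n / 2 := by
    rw [← hcard, ← hAcard]; exact Finset.card_le_card Finset.sdiff_subset
  have hkn : k < n := lt_of_le_of_lt hkA (Nat.div_lt_self (by omega) (by omega))
  have hinj : ∀ a ∈ Finset.Icc 1 n, ∀ b ∈ Finset.Icc 1 n,
      ((a : ℕ) : ZMod n) = ((b : ℕ) : ZMod n) → a = b := by
    intro a ha b hb hab
    rw [ZMod.natCast_eq_natCast_iff'] at hab
    rw [Finset.mem_Icc] at ha hb
    have ha' : a % n = a ∨ a = n := by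
      rcases lt_or_eq_of_le ha.2 with h | h
      · exact Or.inl (Nat.mod_eq_of_lt h)
      · exact Or.inr h
    have hb' : b % n = b ∨ b = n := by
      rcases lt_or_eq_of_le hb.2 with h | h
      · exact Or.inl (Nat.mod_eq_of_lt h)
      · exact Or.inr h
    rcases ha' with h | h <;> rcases hb' with h' | h'
    · rw [h, h'] at hab; exact hab
    · rw [h, h', Nat.mod_self] at hab; omega
    · rw [h, Nat.mod_self, h'] at hab; omega
    · rw [h, h']
  have hBA : (B \ A).card = k := by
    have h1 := Finset.card_sdiff_add_card_inter A B
    have h2 := Finset.card_sdiff_add_card_inter B A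
    rw [Finset.inter_comm] at h2
    omega
  set s := (A \ B).val.map (fun i : ℕ => (i : ZMod n)) with hs
  set t := (B \ A).val.map (fun i : ℕ => (i : ZMod n)) with ht
  have hcards : Multiset.card s = k := by rw [hs, Multiset.card_map]; exact hcard
  have hcardt : Multiset.card t = k := by rw [ht, Multiset.card_map]; exact hBA
  have hchar : ∀ j, 1 ≤ j → j ≤ k → ((j : ℕ) : ZMod n) ≠ 0 := by
    intro j h1 h2 h0
    rw [ZMod.natCast_eq_zero_iff] at h0
    have := Nat.le_of_dvd (by omega) h0
    omega
  have hps : ∀ d, 1 ≤ d → d ≤ k → (s.map (· ^ d)).sum = (t.map (· ^ d)).sum := by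
    intro d h1 h2
    have hA0 : (∑ i ∈ A, ((i : ZMod n)) ^ d) = 0 := by
      have : ((∑ i ∈ A, i ^ d : ℕ) : ZMod n) = 0 := by
        rw [ZMod.natCast_eq_zero_iff]
        exact Nat.dvd_of_mod_eq_zero (hApow d (Finset.mem_Icc.mpr ⟨h1, h2⟩))
      push_cast at this
      exact this
    have hB0 : (∑ i ∈ B, ((i : ZMod n)) ^ d) = 0 := by
      have : ((∑ i ∈ B, i ^ d : ℕ) : ZMod n) = 0 := by
        rw [ZMod.natCast_eq_zero_iff]
        exact Nat.dvd_of_mod_eq_zero (hBpow d (Finset.mem_Icc.mpr ⟨h1, h2⟩))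
      push_cast at this
      exact this
    have hsum : (s.map (· ^ d)).sum = ∑ i ∈ A \ B, ((i : ZMod n)) ^ d := by
      rw [hs, Multiset.map_map]; rfl
    have htum : (t.map (· ^ d)).sum = ∑ i ∈ B \ A, ((i : ZMod n)) ^ d := by
      rw [ht, Multiset.map_map]; rfl
    rw [hsum, htum]
    have hAe : ∑ i ∈ A \ B, ((i : ZMod n)) ^ d
        = ∑ i ∈ A, ((i : ZMod n)) ^ d - ∑ i ∈ A ∩ B, ((i : ZMod n)) ^ d := by
      rw [← Finset.sdiff_inter_self_left A B]
      exact Finset.sum_sdiff_eq_sub Finset.inter_subset_left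
    have hBe : ∑ i ∈ B \ A, ((i : ZMod n)) ^ d
        = ∑ i ∈ B, ((i : ZMod n)) ^ d - ∑ i ∈ A ∩ B, ((i : ZMod n)) ^ d := by
      rw [← Finset.sdiff_inter_self_left B A, Finset.inter_comm B A]
      exact Finset.sum_sdiff_eq_sub (Finset.inter_comm A B ▸ Finset.inter_subset_left)
    rw [hAe, hBe, hA0, hB0]
  have hst := multiset_eq_of_psum_eq k s t hcards hcardt hchar hps
  have hk0 : 0 < (A \ B).card := by omega
  obtain ⟨x, hx⟩ := Finset.card_pos.mp hk0
  have hxs : ((x : ℕ) : ZMod n) ∈ s := Multiset.mem_map_of_mem _ hx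
  rw [hst] at hxs
  obtain ⟨y, hy, hxy⟩ := Multiset.mem_map.mp hxs
  have hyB : y ∈ B \ A := hy
  have hxAB := Finset.mem_sdiff.mp hx
  have hyBA := Finset.mem_sdiff.mp hyB
  have hxy' : y = x := hinj y (hBsub hyBA.1) x (hAsub hxAB.1) hxy
  rw [hxy'] at hyBA
  exact hyBA.2 hxAB.1
end

section
/- Let B be a family of subsets of [n] with |A \ B| ≠ 1 for all A, B ∈ B. Fix a permutation σ of [n], let I = [1, n/2 + n^{2/3}] ∩ ℤ and J = [n/2 + n^{2/3} + 1, n] ∩ ℤ, and for i ∈ I, j ∈ J set C_{i,j} = {σ(1),...,σ(i)} ∪ {σ(j)}. Then there is at most one j ∈ J for which the partial chain {C_{i,j} : i ∈ I} contains a member of B. -/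
theorem stmt_6 (n : ℕ) (ℬ : Finset (Finset ℕ))
    (hℬ : ∀ A ∈ ℬ, ∀ B ∈ ℬ, (A \ B).card ≠ 1)
    (σ : ℕ → ℕ) (hσ : Set.BijOn σ (Set.Icc 1 n) (Set.Icc 1 n))
    (m : ℕ) (hm : m = n / 2 + ⌊(n : ℝ) ^ ((2 : ℝ) / 3)⌋₊)
    (I J : Finset ℕ) (hI : I = Finset.Icc 1 m) (hJ : J = Finset.Icc (m + 1) n)
    (C : ℕ → ℕ → Finset ℕ)
    (hC : ∀ i j, C i j = (Finset.Icc 1 i).image σ ∪ {σ j}) :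
    ∀ j₁ ∈ J, ∀ j₂ ∈ J,
      (∃ i₁ ∈ I, C i₁ j₁ ∈ ℬ) → (∃ i₂ ∈ I, C i₂ j₂ ∈ ℬ) → j₁ = j₂ := by
  intro j₁ hj₁ j₂ hj₂ h₁ h₂
  by_contra hne
  obtain ⟨i₁, hi₁, hB₁⟩ := h₁
  obtain ⟨i₂, hi₂, hB₂⟩ := h₂
  subst hI hJ
  simp only [Finset.mem_Icc] at hi₁ hi₂ hj₁ hj₂
  have hinj := hσ.injOn
  have key : ∀ i i' j j', i ≤ i' → i' ≤ m → m < j → j ≤ n → m < j' → j' ≤ n →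
      j ≠ j' → C i j \ C i' j' = {σ j} := by
    intro i i' j j' hii hi'm hmj hjn hmj' hj'n hjj'
    have hjmem : j ∈ Set.Icc 1 n := ⟨le_trans (Nat.one_le_iff_ne_zero.2 (by omega)) le_rfl, hjn⟩
    have hj'mem : j' ∈ Set.Icc 1 n := ⟨by omega, hj'n⟩
    have hnotim : σ j ∉ (Finset.Icc 1 i').image σ := by
      intro h
      obtain ⟨k, hk, hkeq⟩ := Finset.mem_image.1 h
      rw [Finset.mem_Icc] at hk
      have hkmem : k ∈ Set.Icc 1 n := ⟨hk.1, by omega⟩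
      have := hinj hkmem hjmem hkeq
      omega
    have hne' : σ j ≠ σ j' := fun h => hjj' (hinj hjmem hj'mem h)
    ext x
    simp only [hC, Finset.mem_sdiff, Finset.mem_union, Finset.mem_singleton]
    constructor
    · rintro ⟨h1 | h1, h2⟩
      · exfalso
        apply h2
        left
        obtain ⟨k, hk, hkeq⟩ := Finset.mem_image.1 h1
        rw [Finset.mem_Icc] at hk
        exact Finset.mem_image.2 ⟨k, Finset.mem_Icc.2 ⟨hk.1, le_trans hk.2 hii⟩, hkeq⟩
      · exact h1
    · rintro rfl
      exact ⟨Or.inr rfl, by push_neg; exact ⟨hnotim, hne'⟩⟩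
  rcases le_total i₁ i₂ with h | h
  · have := key i₁ i₂ j₁ j₂ h hi₂.2 (by omega) hj₁.2 (by omega) hj₂.2 hne
    have hcard := hℬ _ hB₁ _ hB₂
    rw [this] at hcard
    simp at hcard
  · have := key i₂ i₁ j₂ j₁ h hi₁.2 (by omega) hj₂.2 (by omega) hj₁.2 (Ne.symm hne)
    have hcard := hℬ _ hB₂ _ hB₁
    rw [this] at hcard
    simp at hcard
end

section
/- Let k ≥ 1 and let B be a family of subsets of a finite set X with |A \ B'| ≠ k for all A, B' ∈ B. Then for any D ⊆ X with |D| ≥ 2k, the family {E ⊆ D : |E| = k, D \ E ∈ B} is intersecting, and hence has size at most C(|D|-1, k-1). -/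
theorem stmt_8 {α : Type*} [DecidableEq α] [Fintype α] (k : ℕ) (hk : 1 ≤ k)
    (ℬ : Finset (Finset α))
    (hℬ : ∀ A ∈ ℬ, ∀ B ∈ ℬ, (A \ B).card ≠ k)
    (D : Finset α) (hD : 2 * k ≤ D.card) :
    (∀ E₁ ∈ (D.powersetCard k).filter (fun E => D \ E ∈ ℬ),
      ∀ E₂ ∈ (D.powersetCard k).filter (fun E => D \ E ∈ ℬ),
        (E₁ ∩ E₂).Nonempty) ∧
    ((D.powersetCard k).filter (fun E => D \ E ∈ ℬ)).card
      ≤ (D.card - 1).choose (k - 1) := by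
  set 𝒜 := (D.powersetCard k).filter (fun E => D \ E ∈ ℬ) with h𝒜
  have hmem : ∀ E ∈ 𝒜, E ⊆ D ∧ E.card = k ∧ D \ E ∈ ℬ := by
    intro E hE
    simp only [h𝒜, Finset.mem_filter, Finset.mem_powersetCard] at hE
    exact ⟨hE.1.1, hE.1.2, hE.2⟩
  have hint : ∀ E₁ ∈ 𝒜, ∀ E₂ ∈ 𝒜, (E₁ ∩ E₂).Nonempty := by
    intro E₁ h1 E₂ h2
    obtain ⟨h1D, h1k, h1B⟩ := hmem E₁ h1
    obtain ⟨h2D, h2k, h2B⟩ := hmem E₂ h2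
    by_contra hne
    rw [Finset.not_nonempty_iff_eq_empty] at hne
    have key : (D \ E₁) \ (D \ E₂) = E₂ := by
      ext x
      simp only [Finset.mem_sdiff, not_and, not_not]
      constructor
      · rintro ⟨⟨hxD, hx1⟩, h⟩; exact h hxD
      · intro hx2
        have hx1 : x ∉ E₁ := by
          intro hx1
          have : x ∈ E₁ ∩ E₂ := Finset.mem_inter.2 ⟨hx1, hx2⟩
          simp [hne] at this
        exact ⟨⟨h2D hx2, hx1⟩, fun _ => hx2⟩
    exact hℬ _ h1B _ h2B (by rw [key, h2k])
  refine ⟨hint, ?_⟩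
  set n := D.card with hn
  let e : {x // x ∈ D} ≃ Fin n := D.equivFin
  let F : Finset α → Finset (Fin n) := fun E =>
    (E.subtype (· ∈ D)).map e.toEmbedding
  have hFcard : ∀ E ⊆ D, (F E).card = E.card := by
    intro E hE
    rw [Finset.card_map]
    have : (E.subtype (· ∈ D)).map (Function.Embedding.subtype _) = E :=
      Finset.subtype_map_of_mem (fun x hx => hE hx)
    calc (E.subtype (· ∈ D)).card
        = ((E.subtype (· ∈ D)).map (Function.Embedding.subtype _)).card :=
          (Finset.card_map _).symm
      _ = E.card := by rw [this]
  have hFinj : ∀ E₁ ⊆ D, ∀ E₂ ⊆ D, F E₁ = F E₂ → E₁ = E₂ := by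
    intro E₁ h1 E₂ h2 h
    have hsub : E₁.subtype (· ∈ D) = E₂.subtype (· ∈ D) :=
      Finset.map_injective _ h
    have e1 : (E₁.subtype (· ∈ D)).map (Function.Embedding.subtype _) = E₁ :=
      Finset.subtype_map_of_mem (fun x hx => h1 hx)
    have e2 : (E₂.subtype (· ∈ D)).map (Function.Embedding.subtype _) = E₂ :=
      Finset.subtype_map_of_mem (fun x hx => h2 hx)
    rw [← e1, ← e2, hsub]
  have hcard : (𝒜.image F).card = 𝒜.card := by
    apply Finset.card_image_of_injOn
    intro E₁ h1 E₂ h2 h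
    exact hFinj E₁ (hmem E₁ h1).1 E₂ (hmem E₂ h2).1 h
  have hsized : ((𝒜.image F : Finset (Finset (Fin n))) : Set (Finset (Fin n))).Sized k := by
    intro A hA
    simp only [Finset.coe_image, Set.mem_image, Finset.mem_coe] at hA
    obtain ⟨E, hE, rfl⟩ := hA
    rw [hFcard E (hmem E hE).1, (hmem E hE).2.1]
  have hinter : ((𝒜.image F : Finset (Finset (Fin n))) : Set (Finset (Fin n))).Intersecting := by
    intro A hA B hB hdisj
    simp only [Finset.coe_image, Set.mem_image, Finset.mem_coe] at hA hB
    obtain ⟨E₁, hE₁, rfl⟩ := hA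
    obtain ⟨E₂, hE₂, rfl⟩ := hB
    obtain ⟨x, hx⟩ := hint E₁ hE₁ E₂ hE₂
    rw [Finset.mem_inter] at hx
    have hxD : x ∈ D := (hmem E₁ hE₁).1 hx.1
    have h1 : e ⟨x, hxD⟩ ∈ F E₁ := by
      simp only [F, Finset.mem_map, Finset.mem_subtype]
      exact ⟨⟨x, hxD⟩, by simpa using hx.1, rfl⟩
    have h2 : e ⟨x, hxD⟩ ∈ F E₂ := by
      simp only [F, Finset.mem_map, Finset.mem_subtype]
      exact ⟨⟨x, hxD⟩, by simpa using hx.2, rfl⟩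
    exact Finset.disjoint_left.1 hdisj h1 h2
  have hk2 : k ≤ n / 2 := Nat.le_div_iff_mul_le (by norm_num) |>.2 (by omega)
  have := Finset.erdos_ko_rado hinter hsized hk2
  rwa [hcard] at this
end

section
/- Suppose p, q are coprime natural numbers with q ≥ p ≥ 0 and (p,q) ≠ (0,0). If A ⊆ P([n]) contains no distinct A, B with q·|A \ B| = p·|B \ A|, then |A| ≤ (q - p + o(1))·C(n, ⌊n/2⌋). -/
open Finset

namespace TS

open scoped Classical

abbrev Gam (n K : ℕ) := Finset (Fin n) × (Fin K → Finset (Fin n)) × (Fin K → Finset (Fin n))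

noncomputable instance (n K : ℕ) : Fintype (Gam n K) := by unfold Gam; infer_instance

def SS {n K : ℕ} (c : Gam n K) (k : ℕ) : Finset (Fin n) :=
  c.1 ∪ (univ.filter (fun i : Fin K => k ≤ (i : ℕ))).biUnion c.2.1
      ∪ (univ.filter (fun i : Fin K => (i : ℕ) < k)).biUnion c.2.2

def Ok (p q lo : ℕ) {n K : ℕ} (c : Gam n K) : Prop :=
  c.1.card = lo - p * K ∧ (∀ i, (c.2.1 i).card = p) ∧ (∀ i, (c.2.2 i).card = q) ∧
  (∀ i j, i ≠ j → Disjoint (c.2.1 i) (c.2.1 j)) ∧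
  (∀ i j, i ≠ j → Disjoint (c.2.2 i) (c.2.2 j)) ∧
  (∀ i j, Disjoint (c.2.1 i) (c.2.2 j)) ∧
  (∀ i, Disjoint c.1 (c.2.1 i)) ∧ (∀ i, Disjoint c.1 (c.2.2 i))

lemma mem_SS {n K : ℕ} {c : Gam n K} {k : ℕ} {x : Fin n} :
    x ∈ SS c k ↔ x ∈ c.1 ∨ (∃ i : Fin K, k ≤ (i : ℕ) ∧ x ∈ c.2.1 i) ∨
      (∃ i : Fin K, (i : ℕ) < k ∧ x ∈ c.2.2 i) := by
  simp [SS, mem_union, mem_biUnion, mem_filter, or_assoc, and_comm]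

lemma card_filter_ivl {K : ℕ} (k l : ℕ) (hl : l ≤ K) :
    ((univ : Finset (Fin K)).filter (fun i : Fin K => k ≤ (i : ℕ) ∧ (i : ℕ) < l)).card = l - k := by
  rw [← Nat.card_Ico k l]
  apply Finset.card_bij' (fun (i : Fin K) _ => (i : ℕ))
    (fun m hm => (⟨m, lt_of_lt_of_le (mem_Ico.1 hm).2 hl⟩ : Fin K))
  case hi => intro i hi; rw [mem_Ico]; exact (mem_filter.1 hi).2
  case hj => intro m hm; rw [mem_filter]; exact ⟨mem_univ _, (mem_Ico.1 hm).1, (mem_Ico.1 hm).2⟩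
  case left_inv => intro i hi; simp
  case right_inv => intro m hm; simp



section FixedParams

variable {n K p q lo : ℕ}

lemma card_SS {c : Gam n K} (h : Ok p q lo c) (hK : p * K ≤ lo) (hpq : p ≤ q)
    {k : ℕ} (hk : k ≤ K) : (SS c k).card = lo + k * (q - p) := by
  obtain ⟨hC, hD, hE, hDD, hEE, hDE, hCD, hCE⟩ := h
  have hBD : ∀ i ∈ (univ.filter (fun i : Fin K => k ≤ (i : ℕ))), ∀ j ∈ (univ.filter (fun i : Fin K => k ≤ (i : ℕ))), i ≠ j → Disjoint (c.2.1 i) (c.2.1 j) := fun i _ j _ hij => hDD i j hij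
  have hBE : ∀ i ∈ (univ.filter (fun i : Fin K => (i : ℕ) < k)), ∀ j ∈ (univ.filter (fun i : Fin K => (i : ℕ) < k)), i ≠ j → Disjoint (c.2.2 i) (c.2.2 j) := fun i _ j _ hij => hEE i j hij
  have d1 : Disjoint (c.1 ∪ (univ.filter (fun i : Fin K => k ≤ (i : ℕ))).biUnion c.2.1)
      ((univ.filter (fun i : Fin K => (i : ℕ) < k)).biUnion c.2.2) := by
    rw [Finset.disjoint_union_left]
    constructor
    · exact Finset.disjoint_biUnion_right _ _ _ |>.2 (fun i _ => hCE i)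
    · rw [Finset.disjoint_biUnion_left]
      intro i _
      exact Finset.disjoint_biUnion_right _ _ _ |>.2 (fun j _ => hDE i j)
  have d2 : Disjoint c.1 ((univ.filter (fun i : Fin K => k ≤ (i : ℕ))).biUnion c.2.1) :=
    Finset.disjoint_biUnion_right _ _ _ |>.2 (fun i _ => hCD i)
  rw [SS, Finset.card_union_of_disjoint d1, Finset.card_union_of_disjoint d2,
    Finset.card_biUnion hBD, Finset.card_biUnion hBE]
  have e1 : (univ.filter (fun i : Fin K => k ≤ (i : ℕ))) =
      (univ.filter (fun i : Fin K => k ≤ (i : ℕ) ∧ (i : ℕ) < K)) := by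
    apply filter_congr; intro i _; simp [i.isLt]
  have e2 : (univ.filter (fun i : Fin K => (i : ℕ) < k)) =
      (univ.filter (fun i : Fin K => 0 ≤ (i : ℕ) ∧ (i : ℕ) < k)) := by
    apply filter_congr; intro i _; simp
  rw [Finset.sum_congr rfl (fun i _ => hD i), Finset.sum_congr rfl (fun i _ => hE i),
    Finset.sum_const, Finset.sum_const, e1, e2, card_filter_ivl k K le_rfl,
    card_filter_ivl 0 k hk, hC, smul_eq_mul, smul_eq_mul]
  have h1 : (K - k) * p + k * p = K * p := by rw [← Nat.add_mul]; congr 1; omega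
  have h2 : k * (q - p) + k * p = k * q := by rw [← Nat.mul_add]; congr 1; omega
  have h3 := Nat.mul_le_mul_left p hk
  have h4 : p * k = k * p := mul_comm _ _
  have h5 : p * K = K * p := mul_comm _ _
  have h6 : q * k = k * q := mul_comm _ _
  have h7 : (k - 0) * q = k * q := by rw [Nat.sub_zero]
  have h8 : lo - p * K + p * K = lo := Nat.sub_add_cancel hK
  omega

lemma SS_sdiff {c : Gam n K} (h : Ok p q lo c) {k l : ℕ} (hkl : k ≤ l) :
    SS c k \ SS c l = (univ.filter (fun i : Fin K => k ≤ (i : ℕ) ∧ (i : ℕ) < l)).biUnion c.2.1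
    ∧ SS c l \ SS c k =
      (univ.filter (fun i : Fin K => k ≤ (i : ℕ) ∧ (i : ℕ) < l)).biUnion c.2.2 := by
  obtain ⟨hC, hD, hE, hDD, hEE, hDE, hCD, hCE⟩ := h
  constructor
  · ext x
    simp only [mem_sdiff, mem_SS, mem_biUnion, mem_filter, mem_univ, true_and]
    constructor
    · rintro ⟨h1, h2⟩
      rcases h1 with hx | ⟨i, hi, hx⟩ | ⟨i, hi, hx⟩
      · exact absurd (Or.inl hx) h2
      · refine ⟨i, ⟨hi, ?_⟩, hx⟩
        by_contra hil
        exact h2 (Or.inr (Or.inl ⟨i, by omega, hx⟩))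
      · exact absurd (Or.inr (Or.inr ⟨i, by omega, hx⟩)) h2
    · rintro ⟨i, ⟨hki, hil⟩, hx⟩
      refine ⟨Or.inr (Or.inl ⟨i, hki, hx⟩), ?_⟩
      rintro (hC' | ⟨j, hj, hx'⟩ | ⟨j, hj, hx'⟩)
      · exact Finset.disjoint_left.1 (hCD i) hC' hx
      · have hij : i ≠ j := by intro e; subst e; omega
        exact Finset.disjoint_left.1 (hDD i j hij) hx hx'
      · exact Finset.disjoint_left.1 (hDE i j) hx hx'
  · ext x
    simp only [mem_sdiff, mem_SS, mem_biUnion, mem_filter, mem_univ, true_and]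
    constructor
    · rintro ⟨h1, h2⟩
      rcases h1 with hx | ⟨i, hi, hx⟩ | ⟨i, hi, hx⟩
      · exact absurd (Or.inl hx) h2
      · exact absurd (Or.inr (Or.inl ⟨i, by omega, hx⟩)) h2
      · refine ⟨i, ⟨?_, hi⟩, hx⟩
        by_contra hik
        exact h2 (Or.inr (Or.inr ⟨i, by omega, hx⟩))
    · rintro ⟨i, ⟨hki, hil⟩, hx⟩
      refine ⟨Or.inr (Or.inr ⟨i, hil, hx⟩), ?_⟩
      rintro (hC' | ⟨j, hj, hx'⟩ | ⟨j, hj, hx'⟩)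
      · exact Finset.disjoint_left.1 (hCE i) hC' hx
      · exact Finset.disjoint_left.1 (hDE j i) hx' hx
      · have hij : i ≠ j := by intro e; subst e; omega
        exact Finset.disjoint_left.1 (hEE i j hij) hx hx'

lemma card_SS_sdiff {c : Gam n K} (h : Ok p q lo c) {k l : ℕ} (hkl : k ≤ l) (hl : l ≤ K) :
    (SS c k \ SS c l).card = p * (l - k) ∧ (SS c l \ SS c k).card = q * (l - k) := by
  obtain ⟨e1, e2⟩ := SS_sdiff h hkl
  obtain ⟨hC, hD, hE, hDD, hEE, hDE, hCD, hCE⟩ := h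
  constructor
  · rw [e1, Finset.card_biUnion (fun i _ j _ hij => hDD i j hij),
      Finset.sum_congr rfl (fun i _ => hD i), Finset.sum_const, card_filter_ivl k l hl,
      smul_eq_mul, mul_comm]
  · rw [e2, Finset.card_biUnion (fun i _ j _ hij => hEE i j hij),
      Finset.sum_congr rfl (fun i _ => hE i), Finset.sum_const, card_filter_ivl k l hl,
      smul_eq_mul, mul_comm]

end FixedParams

lemma once {n K p q lo : ℕ} (𝒜 : Finset (Finset (Fin n)))
    (h𝒜 : ∀ A ∈ 𝒜, ∀ B ∈ 𝒜, A ≠ B → q * (A \ B).card ≠ p * (B \ A).card)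
    {c : Gam n K} (h : Ok p q lo c) (hK : p * K ≤ lo) (hpq : p < q) :
    ((Finset.range (K + 1)).filter (fun k => SS c k ∈ 𝒜)).card ≤ 1 := by
  have key : ∀ k l : ℕ, k < l → l ≤ K → SS c k ∈ 𝒜 → SS c l ∈ 𝒜 → False := by
    intro k l hkl hlK hkA hlA
    have hck := card_SS h hK hpq.le (le_trans (le_of_lt hkl) hlK)
    have hcl := card_SS h hK hpq.le hlK
    have hne : SS c k ≠ SS c l := by
      intro e
      rw [e, hcl] at hck
      have hd : 0 < q - p := by omega
      have h2 := (Nat.mul_lt_mul_right hd).2 hkl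
      omega
    obtain ⟨e1, e2⟩ := card_SS_sdiff h (le_of_lt hkl) hlK
    exact h𝒜 _ hkA _ hlA hne (by rw [e1, e2]; ring)
  rw [Finset.card_le_one]
  intro k hk l hl
  simp only [mem_filter, mem_range] at hk hl
  by_contra hne
  rcases lt_trichotomy k l with h' | h' | h'
  · exact key k l h' (by omega) hk.2 hl.2
  · exact hne h'
  · exact key l k h' (by omega) hl.2 hk.2

def pact {n K : ℕ} (σ : Equiv.Perm (Fin n)) (c : Gam n K) : Gam n K :=
  (c.1.image σ, fun i => (c.2.1 i).image σ, fun i => (c.2.2 i).image σ)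

lemma pact_pact {n K : ℕ} (σ : Equiv.Perm (Fin n)) (c : Gam n K) :
    pact σ.symm (pact σ c) = c := by
  unfold pact
  ext1
  · simp [Finset.image_image]
  · ext1
    · funext i; simp [Finset.image_image]
    · funext i; simp [Finset.image_image]

lemma Ok_pact {n K p q lo : ℕ} (σ : Equiv.Perm (Fin n)) {c : Gam n K} (h : Ok p q lo c) :
    Ok p q lo (pact σ c) := by
  obtain ⟨hC, hD, hE, hDD, hEE, hDE, hCD, hCE⟩ := h
  refine ⟨?_, ?_, ?_, ?_, ?_, ?_, ?_, ?_⟩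
  · rw [pact]; rw [Finset.card_image_of_injective _ σ.injective]; exact hC
  · intro i; rw [pact]; simp only []; rw [Finset.card_image_of_injective _ σ.injective]; exact hD i
  · intro i; rw [pact]; simp only []; rw [Finset.card_image_of_injective _ σ.injective]; exact hE i
  · intro i j hij
    exact (Finset.disjoint_image σ.injective).2 (hDD i j hij)
  · intro i j hij
    exact (Finset.disjoint_image σ.injective).2 (hEE i j hij)
  · intro i j
    exact (Finset.disjoint_image σ.injective).2 (hDE i j)
  · intro i
    exact (Finset.disjoint_image σ.injective).2 (hCD i)
  · intro i
    exact (Finset.disjoint_image σ.injective).2 (hCE i)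

lemma SS_pact {n K : ℕ} (σ : Equiv.Perm (Fin n)) (c : Gam n K) (k : ℕ) :
    SS (pact σ c) k = (SS c k).image σ := by
  simp [SS, pact, Finset.image_union, Finset.biUnion_image]

lemma exists_perm_image {n : ℕ} {A B : Finset (Fin n)} (h : A.card = B.card) :
    ∃ σ : Equiv.Perm (Fin n), A.image σ = B := by
  have h1 : Fintype.card {x // x ∈ A} = Fintype.card {x // x ∈ B} := by
    rw [Fintype.card_coe, Fintype.card_coe, h]
  have h2 : Fintype.card {x // x ∉ A} = Fintype.card {x // x ∉ B} := by
    rw [Fintype.card_subtype_compl, Fintype.card_subtype_compl]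
    rw [h1]
  let e1 := Fintype.equivOfCardEq h1
  let e2 := Fintype.equivOfCardEq h2
  let σ : Equiv.Perm (Fin n) :=
    ((Equiv.sumCompl (· ∈ A)).symm.trans ((e1.sumCongr e2).trans (Equiv.sumCompl (· ∈ B))))
  have hmem : ∀ a ∈ A, σ a ∈ B := by
    intro a ha
    have : (Equiv.sumCompl (· ∈ A)).symm a = Sum.inl ⟨a, ha⟩ :=
      Equiv.sumCompl_symm_apply_of_pos ha
    simp only [σ, Equiv.trans_apply, this, Equiv.sumCongr_apply, Sum.map_inl,
      Equiv.sumCompl_apply_inl]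
    exact (e1 ⟨a, ha⟩).2
  refine ⟨σ, ?_⟩
  apply Finset.eq_of_subset_of_card_le
  · intro b hb
    obtain ⟨a, ha, rfl⟩ := Finset.mem_image.1 hb
    exact hmem a ha
  · rw [Finset.card_image_of_injective _ σ.injective, h]


noncomputable def ChainSet (n K p q lo : ℕ) : Finset (Gam n K) :=
  univ.filter (fun c => Ok p q lo c)

noncomputable def fib (n K p q lo k : ℕ) (A : Finset (Fin n)) : Finset (Gam n K) :=
  univ.filter (fun c => Ok p q lo c ∧ SS c k = A)

lemma fib_const {n K p q lo k : ℕ} {A B : Finset (Fin n)} (h : A.card = B.card) :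
    (fib n K p q lo k A).card = (fib n K p q lo k B).card := by
  obtain ⟨σ, hσ⟩ := exists_perm_image h
  have himg : ∀ {s : Finset (Fin n)}, (s.image σ).image σ.symm = s := by
    intro s; rw [Finset.image_image]; simp
  apply Finset.card_bij' (fun c _ => pact σ c) (fun c _ => pact σ.symm c)
  case hi =>
    intro c hc
    simp only [fib, mem_filter, mem_univ, true_and] at hc ⊢
    exact ⟨Ok_pact σ hc.1, by rw [SS_pact, hc.2, hσ]⟩
  case hj =>
    intro c hc
    simp only [fib, mem_filter, mem_univ, true_and] at hc ⊢
    refine ⟨Ok_pact σ.symm hc.1, ?_⟩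
    rw [SS_pact, hc.2, ← hσ, himg]
  case left_inv => intro c _; exact pact_pact σ c
  case right_inv =>
    intro c _
    have := pact_pact σ.symm c
    rwa [Equiv.symm_symm] at this

lemma fib_sum {n K p q lo k : ℕ} (hK : p * K ≤ lo) (hpq : p ≤ q) (hk : k ≤ K) :
    ∑ A ∈ Finset.powersetCard (lo + k * (q - p)) (univ : Finset (Fin n)),
      (fib n K p q lo k A).card = (ChainSet n K p q lo).card := by
  rw [Finset.card_eq_sum_card_fiberwise (f := fun c => SS c k)
    (t := Finset.powersetCard (lo + k * (q - p)) (univ : Finset (Fin n)))]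
  · apply Finset.sum_congr rfl
    intro A _
    congr 1
    rw [ChainSet, Finset.filter_filter]
    rfl
  · intro c hc
    rw [Finset.mem_coe, Finset.mem_powersetCard_univ]
    exact card_SS (Finset.mem_filter.1 hc).2 hK hpq hk

lemma fib_value {n K p q lo k : ℕ} (hK : p * K ≤ lo) (hpq : p ≤ q) (hk : k ≤ K)
    {A : Finset (Fin n)} (hA : A.card = lo + k * (q - p)) :
    (fib n K p q lo k A).card * n.choose (lo + k * (q - p)) = (ChainSet n K p q lo).card := by
  rw [← fib_sum hK hpq hk]
  have hcongr : ∀ B ∈ Finset.powersetCard (lo + k * (q - p)) (univ : Finset (Fin n)),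
      (fib n K p q lo k B).card = (fib n K p q lo k A).card := by
    intro B hB
    rw [Finset.mem_powersetCard_univ] at hB
    exact fib_const (by rw [hB, hA])
  rw [Finset.sum_congr rfl hcongr, Finset.sum_const, smul_eq_mul,
    Finset.card_powersetCard, Finset.card_univ, Fintype.card_fin, mul_comm]

lemma chainset_nonempty {n K p q lo : ℕ} (hK : p * K ≤ lo) (hn : lo + q * K ≤ n)
    (hpq : p ≤ q) : 0 < (ChainSet n K p q lo).card := by
  rw [Finset.card_pos]
  set c0 := lo - p * K with hc0
  have hc0lo : c0 + p * K = lo := Nat.sub_add_cancel hK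
  have hlon : lo ≤ n := le_trans (Nat.le_add_right _ _) hn
  have hbC : ∀ m ∈ Finset.Ico 0 c0, m < n := by
    intro m hm; have := (Finset.mem_Ico.1 hm).2; omega
  have hbD : ∀ i : Fin K, ∀ m ∈ Finset.Ico (c0 + p * i) (c0 + p * i + p), m < n := by
    intro i m hm
    have h1 := (Finset.mem_Ico.1 hm).2
    have h2 : p * (i + 1) ≤ p * K := Nat.mul_le_mul_left p i.isLt
    have h3 : p * (i + 1) = p * i + p := by ring
    omega
  have hbE : ∀ i : Fin K, ∀ m ∈ Finset.Ico (lo + q * i) (lo + q * i + q), m < n := by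
    intro i m hm
    have h1 := (Finset.mem_Ico.1 hm).2
    have h2 : q * (i + 1) ≤ q * K := Nat.mul_le_mul_left q i.isLt
    have h3 : q * (i + 1) = q * i + q := by ring
    omega
  refine ⟨⟨(Finset.Ico 0 c0).attachFin hbC,
    fun i => (Finset.Ico (c0 + p * i) (c0 + p * i + p)).attachFin (hbD i),
    fun i => (Finset.Ico (lo + q * i) (lo + q * i + q)).attachFin (hbE i)⟩, ?_⟩
  rw [ChainSet, Finset.mem_filter]
  refine ⟨Finset.mem_univ _, ?_, ?_, ?_, ?_, ?_, ?_, ?_, ?_⟩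
  · simp [Finset.card_attachFin, Nat.card_Ico, hc0]
  · intro i; simp [Finset.card_attachFin, Nat.card_Ico]
  · intro i; simp [Finset.card_attachFin, Nat.card_Ico]
  · intro i j hij
    rw [Finset.disjoint_left]
    intro x hx hx'
    rw [Finset.mem_attachFin, Finset.mem_Ico] at hx hx'
    have hvij : (i : ℕ) ≠ (j : ℕ) := fun e => hij (Fin.ext e)
    have e1 : p * (i : ℕ) + p = p * ((i : ℕ) + 1) := by ring
    have e2 : p * (j : ℕ) + p = p * ((j : ℕ) + 1) := by ring
    rcases Nat.lt_or_ge (i : ℕ) (j : ℕ) with h' | h'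
    · have : p * ((i : ℕ) + 1) ≤ p * (j : ℕ) := Nat.mul_le_mul_left p h'
      omega
    · have h'' : (j : ℕ) < (i : ℕ) := by omega
      have : p * ((j : ℕ) + 1) ≤ p * (i : ℕ) := Nat.mul_le_mul_left p h''
      omega
  · intro i j hij
    rw [Finset.disjoint_left]
    intro x hx hx'
    rw [Finset.mem_attachFin, Finset.mem_Ico] at hx hx'
    have hvij : (i : ℕ) ≠ (j : ℕ) := fun e => hij (Fin.ext e)
    rcases Nat.lt_or_ge (i : ℕ) (j : ℕ) with h' | h'
    · have : q * ((i : ℕ) + 1) ≤ q * (j : ℕ) := Nat.mul_le_mul_left q h'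
      have e1 : q * ((i : ℕ) + 1) = q * (i : ℕ) + q := by ring
      omega
    · have h'' : (j : ℕ) < (i : ℕ) := by omega
      have : q * ((j : ℕ) + 1) ≤ q * (i : ℕ) := Nat.mul_le_mul_left q h''
      have e1 : q * ((j : ℕ) + 1) = q * (j : ℕ) + q := by ring
      omega
  · intro i j
    rw [Finset.disjoint_left]
    intro x hx hx'
    rw [Finset.mem_attachFin, Finset.mem_Ico] at hx hx'
    have h2 : p * ((i : ℕ) + 1) ≤ p * K := Nat.mul_le_mul_left p i.isLt
    have h3 : p * ((i : ℕ) + 1) = p * (i : ℕ) + p := by ring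
    omega
  · intro i
    rw [Finset.disjoint_left]
    intro x hx hx'
    rw [Finset.mem_attachFin, Finset.mem_Ico] at hx hx'
    omega
  · intro i
    rw [Finset.disjoint_left]
    intro x hx hx'
    rw [Finset.mem_attachFin, Finset.mem_Ico] at hx hx'
    omega


lemma class_bound {n K p q lo : ℕ} (hpq : p < q) (hK : p * K ≤ lo) (hn : lo + q * K ≤ n)
    (𝒜 : Finset (Finset (Fin n)))
    (h𝒜 : ∀ A ∈ 𝒜, ∀ B ∈ 𝒜, A ≠ B → q * (A \ B).card ≠ p * (B \ A).card) :
    (𝒜.filter (fun A => ∃ k ≤ K, A.card = lo + k * (q - p))).card ≤ n.choose (n / 2) := by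
  classical
  set d := q - p with hd
  have hd0 : 0 < d := by omega
  set T := (ChainSet n K p q lo).card with hT
  set M := n.choose (n / 2) with hM
  set Ak : ℕ → Finset (Finset (Fin n)) :=
    fun k => 𝒜.filter (fun A => A.card = lo + k * d) with hAk
  -- step 1: each chain meets 𝒜 at most once
  have step1 : ∑ c ∈ ChainSet n K p q lo,
      ((Finset.range (K + 1)).filter (fun k => SS c k ∈ 𝒜)).card ≤ T := by
    have : ∀ c ∈ ChainSet n K p q lo,
        ((Finset.range (K + 1)).filter (fun k => SS c k ∈ 𝒜)).card ≤ 1 := by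
      intro c hc
      exact once 𝒜 h𝒜 ((Finset.mem_filter.1 hc).2) hK hpq
    calc ∑ c ∈ ChainSet n K p q lo,
        ((Finset.range (K + 1)).filter (fun k => SS c k ∈ 𝒜)).card
        ≤ ∑ _c ∈ ChainSet n K p q lo, 1 := Finset.sum_le_sum this
      _ = T := by rw [Finset.sum_const, smul_eq_mul, mul_one]
  -- step 2: swap the two sums
  have step2 : ∑ c ∈ ChainSet n K p q lo,
      ((Finset.range (K + 1)).filter (fun k => SS c k ∈ 𝒜)).card
      = ∑ k ∈ Finset.range (K + 1),
        ((ChainSet n K p q lo).filter (fun c => SS c k ∈ 𝒜)).card := by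
    simp_rw [Finset.card_filter]
    exact Finset.sum_comm
  -- step 3: fiber decomposition of each inner count
  have step3 : ∀ k ≤ K, ((ChainSet n K p q lo).filter (fun c => SS c k ∈ 𝒜)).card
      = ∑ A ∈ Ak k, (fib n K p q lo k A).card := by
    intro k hk
    rw [Finset.card_eq_sum_card_fiberwise (f := fun c => SS c k) (t := Ak k)]
    · apply Finset.sum_congr rfl
      intro A hA
      congr 1
      ext c
      simp only [hAk, fib, ChainSet, Finset.mem_filter, Finset.mem_univ, true_and] at hA ⊢
      constructor
      · rintro ⟨⟨h1, _⟩, h3⟩; exact ⟨h1, h3⟩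
      · rintro ⟨h1, h3⟩; exact ⟨⟨h1, h3 ▸ hA.1⟩, h3⟩
    · intro c hc
      simp only [Finset.mem_coe, Finset.mem_filter] at hc
      simp only [hAk, Finset.mem_coe, Finset.mem_filter]
      refine ⟨hc.2, ?_⟩
      exact card_SS (Finset.mem_filter.1 hc.1).2 hK hpq.le hk
  -- step 4: conclusion of the double count
  have step4 : T * ∑ k ∈ Finset.range (K + 1), (Ak k).card ≤ M * T := by
    have hfibM : ∀ k ≤ K, ∀ A ∈ Ak k, T ≤ (fib n K p q lo k A).card * M := by
      intro k hk A hA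
      have hAcard : A.card = lo + k * d := (Finset.mem_filter.1 hA).2
      have := fib_value hK hpq.le hk (A := A) hAcard
      calc T = (fib n K p q lo k A).card * n.choose (lo + k * d) := this.symm
        _ ≤ (fib n K p q lo k A).card * M :=
          Nat.mul_le_mul_left _ (Nat.choose_le_middle _ _)
    calc T * ∑ k ∈ Finset.range (K + 1), (Ak k).card
        = ∑ k ∈ Finset.range (K + 1), ∑ _A ∈ Ak k, T := by
          rw [Finset.mul_sum]
          apply Finset.sum_congr rfl
          intro k _
          rw [Finset.sum_const, smul_eq_mul, mul_comm]
      _ ≤ ∑ k ∈ Finset.range (K + 1), ∑ A ∈ Ak k, (fib n K p q lo k A).card * M := by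
          apply Finset.sum_le_sum
          intro k hk
          apply Finset.sum_le_sum
          intro A hA
          have hkK : k ≤ K := Nat.lt_succ_iff.1 (Finset.mem_range.1 hk)
          exact hfibM k hkK A hA
        -- note: need k ≤ K from hk : k ∈ range (K+1)
      _ = (∑ k ∈ Finset.range (K + 1), ∑ A ∈ Ak k, (fib n K p q lo k A).card) * M := by
          rw [Finset.sum_mul]
          apply Finset.sum_congr rfl
          intro k _
          rw [Finset.sum_mul]
      _ ≤ T * M := by
          apply Nat.mul_le_mul_right
          calc ∑ k ∈ Finset.range (K + 1), ∑ A ∈ Ak k, (fib n K p q lo k A).card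
              = ∑ k ∈ Finset.range (K + 1),
                ((ChainSet n K p q lo).filter (fun c => SS c k ∈ 𝒜)).card := by
                apply Finset.sum_congr rfl
                intro k hk
                exact (step3 k (by simp at hk; omega)).symm
            _ ≤ T := by rw [← step2]; exact step1
      _ = M * T := mul_comm _ _
  have hT0 : 0 < T := chainset_nonempty hK hn hpq.le
  have step5 : ∑ k ∈ Finset.range (K + 1), (Ak k).card ≤ M := by
    have := step4
    rw [mul_comm M T] at this
    exact Nat.le_of_mul_le_mul_left this hT0
  -- step 6: the filter splits into the Ak's
  have step6 : (𝒜.filter (fun A => ∃ k ≤ K, A.card = lo + k * d)).card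
      = ∑ k ∈ Finset.range (K + 1), (Ak k).card := by
    rw [Finset.card_eq_sum_card_fiberwise (f := fun A => (A.card - lo) / d)
      (t := Finset.range (K + 1))]
    · apply Finset.sum_congr rfl
      intro k hk
      have hkK : k ≤ K := by simp at hk; omega
      congr 1
      ext A
      simp only [hAk, Finset.filter_filter, Finset.mem_filter]
      constructor
      · rintro ⟨h1, ⟨k', hk', hck'⟩, h2⟩
        refine ⟨h1, ?_⟩
        have hqd : (A.card - lo) / d = k' := by
          rw [hck', Nat.add_sub_cancel_left, Nat.mul_div_cancel _ hd0]
        rw [hqd] at h2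
        rw [hck', h2]
      · rintro ⟨h1, h2⟩
        refine ⟨h1, ⟨k, hkK, h2⟩, ?_⟩
        rw [h2, Nat.add_sub_cancel_left, Nat.mul_div_cancel _ hd0]
    · intro A hA
      obtain ⟨_, k', hk', hck'⟩ := Finset.mem_filter.1 hA
      rw [Finset.mem_coe, Finset.mem_range]; beta_reduce; rw [hck', Nat.add_sub_cancel_left, Nat.mul_div_cancel _ hd0]
      omega
  rw [step6]
  exact step5


lemma choose_mono_mid {n : ℕ} : ∀ {s t : ℕ}, s ≤ t → t ≤ n / 2 → n.choose s ≤ n.choose t := by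
  intro s t
  induction t with
  | zero => intro hst _; interval_cases s; exact le_rfl
  | succ t ih =>
    intro hst ht
    rcases Nat.lt_or_ge s (t + 1) with h' | h'
    · have h1 : n.choose s ≤ n.choose t := ih (by omega) (by omega)
      exact h1.trans (Nat.choose_le_succ_of_lt_half_left (by omega))
    · have : s = t + 1 := by omega
      rw [this]

lemma low_count {n : ℕ} (𝒜 : Finset (Finset (Fin n))) (b : ℕ) (hb : b ≤ n / 2) :
    (𝒜.filter (fun A => A.card < b)).card ≤ b * n.choose b := by
  have hsub : 𝒜.filter (fun A => A.card < b) ⊆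
      (Finset.range b).biUnion (fun s => Finset.powersetCard s (univ : Finset (Fin n))) := by
    intro A hA
    rw [Finset.mem_biUnion]
    obtain ⟨_, h2⟩ := Finset.mem_filter.1 hA
    exact ⟨A.card, Finset.mem_range.2 h2, Finset.mem_powersetCard_univ.2 rfl⟩
  calc (𝒜.filter (fun A => A.card < b)).card
      ≤ ((Finset.range b).biUnion
          (fun s => Finset.powersetCard s (univ : Finset (Fin n)))).card :=
        Finset.card_le_card hsub
    _ ≤ ∑ s ∈ Finset.range b, (Finset.powersetCard s (univ : Finset (Fin n))).card :=
        Finset.card_biUnion_le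
    _ ≤ ∑ s ∈ Finset.range b, n.choose b := by
        apply Finset.sum_le_sum
        intro s hs
        rw [Finset.card_powersetCard, Finset.card_univ, Fintype.card_fin]
        exact choose_mono_mid (le_of_lt (Finset.mem_range.1 hs)) hb
    _ = b * n.choose b := by rw [Finset.sum_const, Finset.card_range, smul_eq_mul]

lemma high_count {n : ℕ} (𝒜 : Finset (Finset (Fin n))) (b c : ℕ)
    (hc : c ≤ n / 2) (hbc : ∀ s, b < s → s ≤ n → n - s ≤ c) :
    (𝒜.filter (fun A => b < A.card)).card ≤ (n + 1) * n.choose c := by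
  have hsub : 𝒜.filter (fun A => b < A.card) ⊆
      (Finset.Icc (b + 1) n).biUnion
        (fun s => Finset.powersetCard s (univ : Finset (Fin n))) := by
    intro A hA
    rw [Finset.mem_biUnion]
    obtain ⟨_, h2⟩ := Finset.mem_filter.1 hA
    have hle : A.card ≤ n := by
      have := Finset.card_le_univ A
      simpa using this
    exact ⟨A.card, Finset.mem_Icc.2 ⟨h2, hle⟩, Finset.mem_powersetCard_univ.2 rfl⟩
  calc (𝒜.filter (fun A => b < A.card)).card
      ≤ ((Finset.Icc (b + 1) n).biUnion
          (fun s => Finset.powersetCard s (univ : Finset (Fin n)))).card :=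
        Finset.card_le_card hsub
    _ ≤ ∑ s ∈ Finset.Icc (b + 1) n, (Finset.powersetCard s (univ : Finset (Fin n))).card :=
        Finset.card_biUnion_le
    _ ≤ ∑ s ∈ Finset.Icc (b + 1) n, n.choose c := by
        apply Finset.sum_le_sum
        intro s hs
        rw [Finset.card_powersetCard, Finset.card_univ, Fintype.card_fin]
        obtain ⟨hs1, hs2⟩ := Finset.mem_Icc.1 hs
        rw [← Nat.choose_symm hs2]
        exact choose_mono_mid (hbc s (by omega) hs2) hc
    _ ≤ (n + 1) * n.choose c := by
        rw [Finset.sum_const, smul_eq_mul]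
        apply Nat.mul_le_mul_right
        rw [Nat.card_Icc]
        omega

lemma choose_ratio_nat {n m t : ℕ} (h2t : 2 * t ≤ m) (hm : m ≤ n / 2) :
    n.choose (n / 2 - m) * (n / 2 + t) ^ t ≤ n.choose (n / 2) * (n / 2 - t) ^ t := by
  set h := n / 2 with hh
  have hhn : 2 * h ≤ n := by omega
  have key : ∀ j, h - m ≤ j → j < h - m + t →
      n.choose j * (h + t) ≤ n.choose (j + 1) * (h - t) := by
    intro j hj1 hj2
    have hj3 : j + 1 ≤ h - t := by omega
    have hj4 : h + t ≤ n - j := by omega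
    have hid := Nat.choose_succ_right_eq n j
    have h1 : n.choose j * (h + t) * (j + 1) ≤ n.choose (j + 1) * (h - t) * (j + 1) := by
      calc n.choose j * (h + t) * (j + 1)
          = n.choose j * (h + t) * (j + 1) := rfl
        _ ≤ n.choose j * (n - j) * (j + 1) := by
            apply Nat.mul_le_mul_right
            exact Nat.mul_le_mul_left _ hj4
        _ = n.choose (j + 1) * (j + 1) * (j + 1) := by rw [hid]
        _ ≤ n.choose (j + 1) * (h - t) * (j + 1) := by
            apply Nat.mul_le_mul_right
            exact Nat.mul_le_mul_left _ hj3
    exact Nat.le_of_mul_le_mul_right h1 (by omega)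
  have main : ∀ i ≤ t, n.choose (h - m) * (h + t) ^ i ≤ n.choose (h - m + i) * (h - t) ^ i := by
    intro i
    induction i with
    | zero => intro _; simp
    | succ i ih =>
      intro hi
      have hstep := key (h - m + i) (by omega) (by omega)
      calc n.choose (h - m) * (h + t) ^ (i + 1)
          = n.choose (h - m) * (h + t) ^ i * (h + t) := by ring
        _ ≤ n.choose (h - m + i) * (h - t) ^ i * (h + t) :=
            Nat.mul_le_mul_right _ (ih (by omega))
        _ = n.choose (h - m + i) * (h + t) * (h - t) ^ i := by ring
        _ ≤ n.choose (h - m + i + 1) * (h - t) * (h - t) ^ i :=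
            Nat.mul_le_mul_right _ hstep
        _ = n.choose (h - m + (i + 1)) * (h - t) ^ (i + 1) := by
            rw [show h - m + i + 1 = h - m + (i + 1) by omega]; ring
  calc n.choose (h - m) * (h + t) ^ t ≤ n.choose (h - m + t) * (h - t) ^ t := main t le_rfl
    _ ≤ n.choose h * (h - t) ^ t := by
        apply Nat.mul_le_mul_right
        exact choose_mono_mid (by omega) (by omega)


lemma main_count {n p q m : ℕ} (hpq : p < q) (hm1 : 1 ≤ m)
    (hfeas1 : p * (2 * m) ≤ n / 2 - m)
    (hfeas2 : n / 2 - m + (q - p) + q * (2 * m) ≤ n)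
    (hmh : m ≤ n / 2)
    (𝒜 : Finset (Finset (Fin n)))
    (h𝒜 : ∀ A ∈ 𝒜, ∀ B ∈ 𝒜, A ≠ B → q * (A \ B).card ≠ p * (B \ A).card) :
    𝒜.card ≤ (q - p) * n.choose (n / 2) + 2 * ((n + 1) * n.choose (n / 2 - m)) := by
  classical
  set d := q - p with hd
  have hd0 : 0 < d := by omega
  set h := n / 2 with hh
  set K := 2 * m with hK
  set bhigh := h - m + K * d with hbhigh
  have hKd : 2 * m ≤ K * d := by
    calc 2 * m = K * 1 := by omega
      _ ≤ K * d := Nat.mul_le_mul_left _ hd0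
  have hn2h : 2 * h ≤ n ∧ n ≤ 2 * h + 1 := by omega
  set lowP : Finset (Fin n) → Prop := fun A => A.card < h - m with hlowP
  set highP : Finset (Fin n) → Prop := fun A => bhigh < A.card with hhighP
  have split1 : 𝒜.card = (𝒜.filter lowP).card + (𝒜.filter (fun A => ¬ lowP A)).card :=
    (Finset.card_filter_add_card_filter_not (p := lowP)).symm
  set ℬ := 𝒜.filter (fun A => ¬ lowP A) with hB
  have split2 : ℬ.card = (ℬ.filter highP).card + (ℬ.filter (fun A => ¬ highP A)).card :=
    (Finset.card_filter_add_card_filter_not (p := highP)).symm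
  -- low part
  have hlow : (𝒜.filter lowP).card ≤ (n + 1) * n.choose (h - m) := by
    calc (𝒜.filter lowP).card ≤ (h - m) * n.choose (h - m) :=
        low_count 𝒜 (h - m) (by omega)
      _ ≤ (n + 1) * n.choose (h - m) := Nat.mul_le_mul_right _ (by omega)
  -- high part
  have hhigh : (ℬ.filter highP).card ≤ (n + 1) * n.choose (h - m) := by
    have hsub : ℬ.filter highP ⊆ 𝒜.filter (fun A => bhigh < A.card) := by
      intro A hA
      obtain ⟨hA1, hA2⟩ := Finset.mem_filter.1 hA
      exact Finset.mem_filter.2 ⟨(Finset.mem_filter.1 hA1).1, hA2⟩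
    calc (ℬ.filter highP).card ≤ (𝒜.filter (fun A => bhigh < A.card)).card :=
        Finset.card_le_card hsub
      _ ≤ (n + 1) * n.choose (h - m) := by
          apply high_count 𝒜 bhigh (h - m) (by omega)
          intro s hs1 hs2
          omega
  -- middle part
  have hmid : (ℬ.filter (fun A => ¬ highP A)).card ≤ d * n.choose h := by
    have hcover : ℬ.filter (fun A => ¬ highP A) ⊆
        (Finset.range d).biUnion (fun j =>
          𝒜.filter (fun A => ∃ k ≤ K, A.card = (h - m + j) + k * d)) := by
      intro A hA
      obtain ⟨hA1, hA2⟩ := Finset.mem_filter.1 hA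
      obtain ⟨hA0, hA3⟩ := Finset.mem_filter.1 hA1
      simp only [hlowP, not_lt] at hA3
      simp only [hhighP, not_lt] at hA2
      set x := A.card - (h - m) with hx
      have hxK : x ≤ K * d := by omega
      have hjd : x % d < d := Nat.mod_lt _ hd0
      have hkK : x / d ≤ K := by
        calc x / d ≤ (K * d) / d := Nat.div_le_div_right hxK
          _ = K := Nat.mul_div_cancel _ hd0
      rw [Finset.mem_biUnion]
      refine ⟨x % d, Finset.mem_range.2 hjd, Finset.mem_filter.2 ⟨hA0, x / d, hkK, ?_⟩⟩
      have := Nat.div_add_mod x d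
      have hcomm : d * (x / d) = (x / d) * d := mul_comm _ _
      omega
    calc (ℬ.filter (fun A => ¬ highP A)).card
        ≤ ((Finset.range d).biUnion (fun j =>
            𝒜.filter (fun A => ∃ k ≤ K, A.card = (h - m + j) + k * d))).card :=
          Finset.card_le_card hcover
      _ ≤ ∑ j ∈ Finset.range d,
            (𝒜.filter (fun A => ∃ k ≤ K, A.card = (h - m + j) + k * d)).card :=
          Finset.card_biUnion_le
      _ ≤ ∑ _j ∈ Finset.range d, n.choose h := by
          apply Finset.sum_le_sum
          intro j hj
          have hjd : j < d := Finset.mem_range.1 hj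
          apply class_bound hpq
          · omega
          · omega
          · exact h𝒜
      _ = d * n.choose h := by rw [Finset.sum_const, Finset.card_range, smul_eq_mul]
  omega


lemma binom_quad {t : ℕ} (ht : 2 ≤ t) {x : ℝ} (hx : 0 ≤ x) :
    (t.choose 2 : ℝ) * x ^ 2 ≤ (1 + x) ^ t := by
  have h := add_pow x 1 t
  have : ((1 : ℝ) + x) ^ t = ∑ k ∈ Finset.range (t + 1), x ^ k * (t.choose k : ℝ) := by
    rw [add_comm]
    rw [h]
    apply Finset.sum_congr rfl
    intro k _
    rw [one_pow, mul_one]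
  rw [this]
  have h2 : (2 : ℕ) ∈ Finset.range (t + 1) := Finset.mem_range.2 (by omega)
  calc (t.choose 2 : ℝ) * x ^ 2 = x ^ 2 * (t.choose 2 : ℝ) := by ring
    _ ≤ ∑ k ∈ Finset.range (t + 1), x ^ k * (t.choose k : ℝ) := by
        apply Finset.single_le_sum (f := fun k => x ^ k * (t.choose k : ℝ)) _ h2
        intro k _
        positivity

lemma two_choose_two (t : ℕ) (ht : 1 ≤ t) : 2 * t.choose 2 = t * (t - 1) := by
  rw [Nat.choose_two_right]
  have heven : 2 ∣ t * (t - 1) := by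
    rcases Nat.even_or_odd t with he | ho
    · exact Dvd.dvd.mul_right he.two_dvd _
    · have : Even (t - 1) := by
        rcases ho with ⟨c, hc⟩
        exact ⟨c, by omega⟩
      exact Dvd.dvd.mul_left this.two_dvd _
  exact Nat.mul_div_cancel' heven

lemma tail_small {n m t : ℕ} {ε : ℝ} (hε : 0 < ε) (h2t : 2 * t ≤ m) (hmh : m ≤ n / 2)
    (ht2 : 2 ≤ t) (hth : t < n / 2)
    (hkey : ((n : ℝ) + 1) * ((n / 2 : ℕ) : ℝ) ^ 2 ≤ ε * (t : ℝ) ^ 3 * ((t : ℝ) - 1)) :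
    2 * (((n : ℝ) + 1) * (n.choose (n / 2 - m) : ℝ)) ≤ ε * (n.choose (n / 2) : ℝ) := by
  set h := n / 2 with hh
  set H := (h : ℝ) with hH
  set T := (t : ℝ) with hT
  have hTle : T + 1 ≤ H := by
    rw [hH, hT]
    exact_mod_cast Nat.succ_le_of_lt hth
  have hT2 : (2 : ℝ) ≤ T := by rw [hT]; exact_mod_cast ht2
  have hH0 : 0 < H := by linarith
  have hA0 : (0 : ℝ) < H - T := by linarith
  have hB0 : (0 : ℝ) < H + T := by linarith
  set x := 2 * T / H with hx
  have hx0 : 0 < x := by positivity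
  -- step 1 : cast the nat ratio inequality
  have hnat := choose_ratio_nat (n := n) (m := m) (t := t) h2t hmh
  have hth' : t ≤ h := le_of_lt hth
  have step1 : (n.choose (h - m) : ℝ) * (H + T) ^ t ≤ (n.choose h : ℝ) * (H - T) ^ t := by
    have := hnat
    have hcast : ((n.choose (h - m) * (h + t) ^ t : ℕ) : ℝ)
        ≤ ((n.choose h * (h - t) ^ t : ℕ) : ℝ) := by exact_mod_cast this
    push_cast [Nat.cast_sub hth'] at hcast
    convert hcast using 2
  -- step 2 : (1+x)*(H-T) ≤ H+T
  have step2 : (1 + x) * (H - T) ≤ H + T := by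
    have hexp : (1 + x) * (H - T) = H + T - 2 * T ^ 2 / H := by
      rw [hx]; field_simp; ring
    rw [hexp]
    have : 0 ≤ 2 * T ^ 2 / H := by positivity
    linarith
  -- step 3
  have step3 : (1 + x) ^ t * (H - T) ^ t ≤ (H + T) ^ t := by
    rw [← mul_pow]
    apply pow_le_pow_left₀ (by positivity) step2
  -- step 5 : choose(h-m) * (1+x)^t ≤ choose h
  have step5 : (n.choose (h - m) : ℝ) * (1 + x) ^ t ≤ (n.choose h : ℝ) := by
    have hAt : (0 : ℝ) < (H - T) ^ t := by positivity
    rw [← mul_le_mul_iff_of_pos_right hAt]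
    calc (n.choose (h - m) : ℝ) * (1 + x) ^ t * (H - T) ^ t
        = (n.choose (h - m) : ℝ) * ((1 + x) ^ t * (H - T) ^ t) := by ring
      _ ≤ (n.choose (h - m) : ℝ) * (H + T) ^ t := by
          apply mul_le_mul_of_nonneg_left step3 (by positivity)
      _ ≤ (n.choose h : ℝ) * (H - T) ^ t := step1
  -- step 4+6 : quadratic lower bound
  have step4 : (t.choose 2 : ℝ) * x ^ 2 ≤ (1 + x) ^ t := binom_quad ht2 hx0.le
  have step6 : (n.choose (h - m) : ℝ) * ((t.choose 2 : ℝ) * x ^ 2) ≤ (n.choose h : ℝ) := by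
    calc (n.choose (h - m) : ℝ) * ((t.choose 2 : ℝ) * x ^ 2)
        ≤ (n.choose (h - m) : ℝ) * (1 + x) ^ t :=
          mul_le_mul_of_nonneg_left step4 (by positivity)
      _ ≤ (n.choose h : ℝ) := step5
  -- step 7 : 2*(n+1) ≤ ε * C(t,2) * x^2
  have hc2 : (2 : ℝ) * (t.choose 2 : ℝ) = T * (T - 1) := by
    have h1 := two_choose_two t (by omega)
    have hcast : ((2 * t.choose 2 : ℕ) : ℝ) = ((t * (t - 1) : ℕ) : ℝ) := by rw [h1]
    rw [Nat.cast_mul, Nat.cast_mul, Nat.cast_sub (show 1 ≤ t by omega)] at hcast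
    push_cast at hcast
    rw [hT]
    linarith [hcast]
  have step7 : 2 * ((n : ℝ) + 1) ≤ ε * ((t.choose 2 : ℝ) * x ^ 2) := by
    have hx2 : x ^ 2 = 4 * T ^ 2 / H ^ 2 := by
      rw [hx]; field_simp; ring
    rw [hx2]
    have hH2 : (0 : ℝ) < H ^ 2 := by positivity
    have h7eq : ε * ((t.choose 2 : ℝ) * (4 * T ^ 2)) = 2 * (ε * T ^ 3 * (T - 1)) := by
      linear_combination (2 * ε * T ^ 2) * hc2
    have h7 : 2 * ((n : ℝ) + 1) * H ^ 2 ≤ ε * ((t.choose 2 : ℝ) * (4 * T ^ 2)) := by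
      rw [h7eq]; linarith
    calc 2 * ((n : ℝ) + 1) = 2 * ((n : ℝ) + 1) * H ^ 2 / H ^ 2 := by field_simp
      _ ≤ ε * ((t.choose 2 : ℝ) * (4 * T ^ 2)) / H ^ 2 := (div_le_div_iff_of_pos_right hH2).2 h7
      _ = ε * ((t.choose 2 : ℝ) * (4 * T ^ 2 / H ^ 2)) := by ring
  -- combine
  calc 2 * (((n : ℝ) + 1) * (n.choose (h - m) : ℝ))
      = (2 * ((n : ℝ) + 1)) * (n.choose (h - m) : ℝ) := by ring
    _ ≤ (ε * ((t.choose 2 : ℝ) * x ^ 2)) * (n.choose (h - m) : ℝ) :=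
        mul_le_mul_of_nonneg_right step7 (by positivity)
    _ = ε * ((n.choose (h - m) : ℝ) * ((t.choose 2 : ℝ) * x ^ 2)) := by ring
    _ ≤ ε * (n.choose h : ℝ) := mul_le_mul_of_nonneg_left step6 hε.le

end TS

theorem stmt_15 (p q : ℕ) (hpq : Nat.Coprime p q) (hq : p ≤ q)
    (hne : ¬(p = 0 ∧ q = 0)) :
    ∀ ε : ℝ, 0 < ε → ∃ N : ℕ, ∀ n : ℕ, N ≤ n →
      ∀ 𝒜 : Finset (Finset (Fin n)),
        (∀ A ∈ 𝒜, ∀ B ∈ 𝒜, A ≠ B → q * (A \ B).card ≠ p * (B \ A).card) →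
        (𝒜.card : ℝ) ≤ ((q : ℝ) - p + ε) * n.choose (n / 2) := by
  intro ε hε
  rcases Nat.lt_or_ge p q with hlt | hge
  · -- main case p < q
    set Q := 8 * (q + 1) with hQdef
    set Tc := ⌈64 * (Q : ℝ) ^ 3 / ε⌉₊ + 1 with hTcdef
    refine ⟨Q * (2 * Tc + 4) + 16 * Q + 16, ?_⟩
    intro n hn 𝒜 h𝒜
    set m := n / Q with hmdef
    set t := m / 2 with htdef
    have hQ4 : 8 ≤ Q := by omega
    have hQ0 : 0 < Q := by omega
    have edm : Q * m + n % Q = n := Nat.div_add_mod n Q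
    have hmod : n % Q < Q := Nat.mod_lt _ hQ0
    have edt : 2 * t + m % 2 = m := Nat.div_add_mod m 2
    have hmod2 : m % 2 < 2 := Nat.mod_lt _ (by omega)
    -- basic product facts
    have hXn : 8 * ((q + 1) * m) ≤ n := by
      calc 8 * ((q + 1) * m) = Q * m := by rw [hQdef]; ring
        _ ≤ n := by omega
    have hX8 : (q + 1) * m ≤ n / 8 := (Nat.le_div_iff_mul_le (by norm_num)).2 (by omega)
    have hpm : p * m ≤ (q + 1) * m := Nat.mul_le_mul_right _ (by omega)
    have hqm : q * m ≤ (q + 1) * m := Nat.mul_le_mul_right _ (by omega)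
    have hmbig : 2 * Tc + 4 ≤ m := (Nat.le_div_iff_mul_le hQ0).2 (by
      calc (2 * Tc + 4) * Q = Q * (2 * Tc + 4) := mul_comm _ _
        _ ≤ n := by omega)
    have htTc : Tc + 2 ≤ t := by omega
    have hm1 : 1 ≤ m := by omega
    have hmX : m ≤ (q + 1) * m := Nat.le_mul_of_pos_left _ (by omega)
    have hq1X : q + 1 ≤ (q + 1) * m := Nat.le_mul_of_pos_right _ (by omega)
    have hmh : m ≤ n / 2 := by omega
    have hth : t < n / 2 := by omega
    have ht2 : 2 ≤ t := by omega
    have h2t : 2 * t ≤ m := by omega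
    have hfeas1 : p * (2 * m) ≤ n / 2 - m := by
      have e : p * (2 * m) = 2 * (p * m) := by ring
      omega
    have hfeas2 : n / 2 - m + (q - p) + q * (2 * m) ≤ n := by
      have e : q * (2 * m) = 2 * (q * m) := by ring
      omega
    have hcount := TS.main_count hlt hm1 hfeas1 hfeas2 hmh 𝒜 h𝒜
    -- the key numeric inequality
    have hn4 : n + 1 ≤ 4 * (Q * t) := by
      have h1 : Q * (m + 1) ≤ Q * (2 * t + 2) := Nat.mul_le_mul_left _ (by omega)
      have h2 : Q * (2 * t + 2) ≤ Q * (4 * t) := Nat.mul_le_mul_left _ (by omega)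
      have h3 : Q * (4 * t) = 4 * (Q * t) := by ring
      have h4 : Q * (m + 1) = Q * m + Q := by ring
      omega
    have hkey : ((n : ℝ) + 1) * ((n / 2 : ℕ) : ℝ) ^ 2 ≤ ε * (t : ℝ) ^ 3 * ((t : ℝ) - 1) := by
      set R := 4 * (Q : ℝ) * (t : ℝ) with hRdef
      have hR1 : (n : ℝ) + 1 ≤ R := by
        rw [hRdef]
        calc (n : ℝ) + 1 ≤ ((4 * (Q * t) : ℕ) : ℝ) := by exact_mod_cast hn4
          _ = 4 * (Q : ℝ) * (t : ℝ) := by push_cast; ring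
      have hR0 : (0 : ℝ) ≤ R := le_trans (by positivity) hR1
      have hH : ((n / 2 : ℕ) : ℝ) ≤ R := by
        have h1 : ((n / 2 : ℕ) : ℝ) ≤ (n : ℝ) := by exact_mod_cast Nat.div_le_self n 2
        linarith
      have hHnn : (0 : ℝ) ≤ ((n / 2 : ℕ) : ℝ) := by positivity
      have step : ((n : ℝ) + 1) * ((n / 2 : ℕ) : ℝ) ^ 2 ≤ R ^ 3 := by
        calc ((n : ℝ) + 1) * ((n / 2 : ℕ) : ℝ) ^ 2 ≤ R * R ^ 2 := by
              apply mul_le_mul hR1 (pow_le_pow_left₀ hHnn hH 2) (by positivity) hR0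
          _ = R ^ 3 := by ring
      have hRcube : R ^ 3 = (t : ℝ) ^ 3 * (64 * (Q : ℝ) ^ 3) := by rw [hRdef]; ring
      have hce : 64 * (Q : ℝ) ^ 3 ≤ ε * ((t : ℝ) - 1) := by
        have h1 : (64 * (Q : ℝ) ^ 3 / ε) ≤ (Tc : ℝ) := by
          rw [hTcdef]
          push_cast
          have := Nat.le_ceil (64 * (Q : ℝ) ^ 3 / ε)
          linarith
        have h2 : (Tc : ℝ) ≤ (t : ℝ) - 1 := by
          have h21 : (Tc + 1 : ℕ) ≤ t := by omega
          have hc : ((Tc + 1 : ℕ) : ℝ) ≤ (t : ℝ) := by exact_mod_cast h21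
          have hTcr : (Tc : ℝ) = (⌈64 * (Q : ℝ) ^ 3 / ε⌉₊ : ℝ) + 1 := by
            rw [hTcdef]; push_cast; ring
          have hc' : (Tc : ℝ) + 1 ≤ (t : ℝ) := by push_cast at hc; rw [hTcr]; linarith
          linarith
        calc 64 * (Q : ℝ) ^ 3 = (64 * (Q : ℝ) ^ 3 / ε) * ε := by field_simp
          _ ≤ (Tc : ℝ) * ε := mul_le_mul_of_nonneg_right h1 hε.le
          _ ≤ ((t : ℝ) - 1) * ε := mul_le_mul_of_nonneg_right h2 hε.le
          _ = ε * ((t : ℝ) - 1) := mul_comm _ _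
      calc ((n : ℝ) + 1) * ((n / 2 : ℕ) : ℝ) ^ 2 ≤ R ^ 3 := step
        _ = (t : ℝ) ^ 3 * (64 * (Q : ℝ) ^ 3) := hRcube
        _ ≤ (t : ℝ) ^ 3 * (ε * ((t : ℝ) - 1)) :=
            mul_le_mul_of_nonneg_left hce (by positivity)
        _ = ε * (t : ℝ) ^ 3 * ((t : ℝ) - 1) := by ring
    have htail := TS.tail_small hε h2t hmh ht2 hth hkey
    -- combine
    have hcast : (𝒜.card : ℝ) ≤ ((q - p : ℕ) : ℝ) * (n.choose (n / 2) : ℝ)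
        + 2 * (((n : ℝ) + 1) * (n.choose (n / 2 - m) : ℝ)) := by
      have := hcount
      have hc : ((𝒜.card : ℕ) : ℝ) ≤ (((q - p) * n.choose (n / 2)
          + 2 * ((n + 1) * n.choose (n / 2 - m)) : ℕ) : ℝ) := by exact_mod_cast this
      push_cast at hc
      convert hc using 2 <;> push_cast <;> ring
    have hqp : ((q - p : ℕ) : ℝ) = (q : ℝ) - (p : ℝ) := by
      rw [Nat.cast_sub hq]
    calc (𝒜.card : ℝ)
        ≤ ((q - p : ℕ) : ℝ) * (n.choose (n / 2) : ℝ)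
          + 2 * (((n : ℝ) + 1) * (n.choose (n / 2 - m) : ℝ)) := hcast
      _ ≤ ((q - p : ℕ) : ℝ) * (n.choose (n / 2) : ℝ) + ε * (n.choose (n / 2) : ℝ) := by
          linarith [htail]
      _ = ((q : ℝ) - p + ε) * (n.choose (n / 2) : ℝ) := by rw [hqp]; ring
  · -- degenerate case p = q, hence p = q = 1
    have hpq1 : p = q := le_antisymm hq hge
    have hp1 : p = 1 := by
      have := hpq
      rw [Nat.Coprime, hpq1, Nat.gcd_self] at this
      omega
    have hq1 : q = 1 := by omega
    refine ⟨⌈4 / ε⌉₊ + 5, ?_⟩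
    intro n hn 𝒜 h𝒜
    -- all members of 𝒜 have distinct cardinalities
    have hinj : Set.InjOn (fun A : Finset (Fin n) => A.card) ↑𝒜 := by
      intro A hA B hB hAB
      by_contra hne'
      have e1 : (A \ B).card + (A ∩ B).card = A.card := Finset.card_sdiff_add_card_inter A B
      have e2 : (B \ A).card + (B ∩ A).card = B.card := Finset.card_sdiff_add_card_inter B A
      have e3 : (A ∩ B) = (B ∩ A) := Finset.inter_comm A B
      have := h𝒜 A hA B hB hne'
      rw [hp1, hq1] at this
      simp only at hAB
      rw [e3] at e1
      omega
    have hcard : 𝒜.card ≤ n + 1 := by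
      have hmap : ∀ A ∈ 𝒜, A.card ∈ Finset.range (n + 1) := by
        intro A hA
        rw [Finset.mem_range]
        have := Finset.card_le_univ A
        simp at this
        omega
      have := Finset.card_le_card_of_injOn (fun A : Finset (Fin n) => A.card) hmap hinj
      simpa using this
    -- numeric : n + 1 ≤ ε * C(n, n/2)
    have hc2 : 2 * (n.choose 2) = n * (n - 1) := TS.two_choose_two n (by omega)
    have hcmid : (n.choose 2 : ℝ) ≤ (n.choose (n / 2) : ℝ) := by
      exact_mod_cast Nat.choose_le_middle 2 n
    have hc2r : 2 * ((n.choose 2 : ℕ) : ℝ) = (n : ℝ) * ((n : ℝ) - 1) := by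
      have hcast : ((2 * n.choose 2 : ℕ) : ℝ) = ((n * (n - 1) : ℕ) : ℝ) := by rw [hc2]
      rw [Nat.cast_mul, Nat.cast_mul, Nat.cast_sub (by omega : 1 ≤ n)] at hcast
      push_cast at hcast
      linarith [hcast]
    have hεn : 4 ≤ ε * ((n : ℝ) - 1) := by
      have h1 : (4 / ε : ℝ) ≤ (⌈4 / ε⌉₊ : ℝ) := Nat.le_ceil _
      have h2 : ((⌈4 / ε⌉₊ + 1 : ℕ) : ℝ) ≤ (n : ℝ) := by
        exact_mod_cast (by omega : ⌈4 / ε⌉₊ + 1 ≤ n)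
      push_cast at h2
      calc (4 : ℝ) = (4 / ε) * ε := by field_simp
        _ ≤ ((n : ℝ) - 1) * ε := by
            apply mul_le_mul_of_nonneg_right _ hε.le
            linarith
        _ = ε * ((n : ℝ) - 1) := mul_comm _ _
    have hfinal : ((n : ℝ) + 1) ≤ ε * (n.choose (n / 2) : ℝ) := by
      have hn1 : (1 : ℝ) ≤ (n : ℝ) := by exact_mod_cast (by omega : 1 ≤ n)
      have step : ε * ((n : ℝ) * ((n : ℝ) - 1)) ≥ 4 * (n : ℝ) := by
        calc ε * ((n : ℝ) * ((n : ℝ) - 1)) = (ε * ((n : ℝ) - 1)) * (n : ℝ) := by ring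
          _ ≥ 4 * (n : ℝ) := by
              apply mul_le_mul_of_nonneg_right hεn (by positivity)
      calc ((n : ℝ) + 1) ≤ 2 * (n : ℝ) := by linarith
        _ ≤ ε * ((n : ℝ) * ((n : ℝ) - 1)) / 2 := by linarith
        _ = ε * ((n : ℝ) * ((n : ℝ) - 1) / 2) := by ring
        _ = ε * ((n.choose 2 : ℕ) : ℝ) := by rw [show (n : ℝ) * ((n : ℝ) - 1) / 2 = ((n.choose 2 : ℕ) : ℝ) by linarith [hc2r]]
        _ ≤ ε * (n.choose (n / 2) : ℝ) := mul_le_mul_of_nonneg_left hcmid hε.le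
    have hqp0 : (q : ℝ) - (p : ℝ) = 0 := by rw [hp1, hq1]; ring
    calc (𝒜.card : ℝ) ≤ ((n : ℝ) + 1) := by exact_mod_cast hcard
      _ ≤ ε * (n.choose (n / 2) : ℝ) := hfinal
      _ = ((q : ℝ) - p + ε) * (n.choose (n / 2) : ℝ) := by rw [hqp0]; ring
end

section
/- Let k ≥ 1 and n prime with n > 2k. Then there are no sets A, B ⊆ [n] with |A| = |B|, |A \ B| = k, and Σ_{i∈A} i^d ≡ Σ_{i∈B} i^d (mod n) for all 1 ≤ d ≤ k; equivalently, if |A| = |B| and all power sums of orders 1 through k agree mod n, then |A \ B| ≠ k. -/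
open Finset Polynomial

lemma aeval_psum_apply {F : Type*} [Field F] {k : ℕ} (f : Fin k → F) (d : ℕ) :
    MvPolynomial.aeval f (MvPolynomial.psum (Fin k) F d) = ∑ i, f i ^ d := by
  simp [MvPolynomial.psum, map_sum]

lemma newton_aux {F : Type*} [Field F] (k : ℕ) (f g : Fin k → F)
    (hchar : ∀ d : ℕ, 0 < d → d ≤ k → (d : F) ≠ 0)
    (hp : ∀ d : ℕ, 0 < d → d ≤ k → ∑ i, f i ^ d = ∑ i, g i ^ d) :
    Multiset.map f Finset.univ.val = Multiset.map g Finset.univ.val := by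
  set S := Multiset.map f Finset.univ.val with hSdef
  set T := Multiset.map g Finset.univ.val with hTdef
  have hcardS : Multiset.card S = k := by simp [hSdef]
  have hcardT : Multiset.card T = k := by simp [hTdef]
  -- elementary symmetric functions agree
  have hesymm : ∀ d : ℕ, d ≤ k → S.esymm d = T.esymm d := by
    intro d
    induction d using Nat.strong_induction_on with
    | _ d ih =>
      intro hdk
      rcases Nat.eq_zero_or_pos d with h0 | h0
      · simp [h0, Multiset.esymm]
      · have keyf := congrArg (MvPolynomial.aeval f) (MvPolynomial.mul_esymm_eq_sum (Fin k) F d)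
        have keyg := congrArg (MvPolynomial.aeval g) (MvPolynomial.mul_esymm_eq_sum (Fin k) F d)
        simp only [map_mul, map_sum, map_pow, map_neg, map_one, map_natCast,
          MvPolynomial.aeval_esymm_eq_multiset_esymm, aeval_psum_apply] at keyf keyg
        rw [← hSdef] at keyf
        rw [← hTdef] at keyg
        have hsum : ∑ a ∈ Finset.HasAntidiagonal.antidiagonal d with a.1 < d,
            (-1 : F) ^ a.1 * S.esymm a.1 * ∑ i, f i ^ a.2
            = ∑ a ∈ Finset.HasAntidiagonal.antidiagonal d with a.1 < d,
            (-1 : F) ^ a.1 * T.esymm a.1 * ∑ i, g i ^ a.2 := by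
          refine Finset.sum_congr rfl fun a ha => ?_
          simp only [Finset.mem_filter, Finset.HasAntidiagonal.mem_antidiagonal] at ha
          have h1 : a.1 < d := ha.2
          have h2 : 0 < a.2 := by omega
          have h3 : a.2 ≤ k := by omega
          rw [ih a.1 h1 (by omega), hp a.2 h2 h3]
        have : (d : F) * S.esymm d = (d : F) * T.esymm d := by
          rw [keyf, keyg, hsum]
        exact mul_left_cancel₀ (hchar d h0 hdk) this
  -- Vieta: the polynomials ∏ (X + C r) agree
  have hprod : (S.map fun r => X + C r).prod = (T.map fun r => X + C r).prod := by
    rw [Multiset.prod_X_add_C_eq_sum_esymm, Multiset.prod_X_add_C_eq_sum_esymm,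
      hcardS, hcardT]
    refine Finset.sum_congr rfl fun j hj => ?_
    rw [hesymm j (by simpa using Nat.lt_succ_iff.mp (Finset.mem_range.mp hj))]
  -- convert to ∏ (X - C (-r)) and take roots
  have hconv : ∀ U : Multiset F, (U.map fun r => X + C r).prod
      = ((U.map Neg.neg).map fun a => X - C a).prod := by
    intro U
    rw [Multiset.map_map]
    refine congrArg Multiset.prod (Multiset.map_congr rfl fun r _ => ?_)
    simp [sub_neg_eq_add]
  have hroots : S.map Neg.neg = T.map Neg.neg := by
    have h1 := Polynomial.roots_multiset_prod_X_sub_C (S.map Neg.neg)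
    have h2 := Polynomial.roots_multiset_prod_X_sub_C (T.map Neg.neg)
    rw [← h1, ← h2, ← hconv, ← hconv, hprod]
  exact Multiset.map_injective neg_injective hroots

theorem stmt_16 (n k : ℕ) (hn : n.Prime) (hk : 1 ≤ k) (hnk : 2 * k < n)
    (A B : Finset ℕ) (hA : A ⊆ Finset.Icc 1 n) (hB : B ⊆ Finset.Icc 1 n)
    (hcard : A.card = B.card)
    (hpow : ∀ d ∈ Finset.Icc 1 k, (∑ i ∈ A, i ^ d) ≡ (∑ i ∈ B, i ^ d) [MOD n]) :
    (A \ B).card ≠ k := by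
  intro hABk
  haveI : Fact n.Prime := ⟨hn⟩
  set c : ℕ → ZMod n := Nat.cast with hc
  -- injectivity of cast on [1, n]
  have hinj : ∀ x ∈ Finset.Icc 1 n, ∀ y ∈ Finset.Icc 1 n, c x = c y → x = y := by
    intro x hx y hy hxy
    rw [Finset.mem_Icc] at hx hy
    have hmod : x % n = y % n := (ZMod.natCast_eq_natCast_iff' x y n).mp hxy
    have hn1 : 1 < n := hn.one_lt
    rcases eq_or_lt_of_le hx.2 with hxn | hxn <;>
      rcases eq_or_lt_of_le hy.2 with hyn | hyn
    · omega
    · rw [hxn, Nat.mod_self, Nat.mod_eq_of_lt hyn] at hmod; omega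
    · rw [hyn, Nat.mod_self, Nat.mod_eq_of_lt hxn] at hmod; omega
    · rw [Nat.mod_eq_of_lt hxn, Nat.mod_eq_of_lt hyn] at hmod; omega
  have hBAk : (B \ A).card = k := by
    rw [Finset.card_sdiff_comm hcard.symm]; exact hABk
  -- power sums of the symmetric differences agree
  have hps : ∀ d : ℕ, 0 < d → d ≤ k →
      (∑ i ∈ A \ B, c i ^ d) = ∑ i ∈ B \ A, c i ^ d := by
    intro d hd1 hd2
    have hAB' : (∑ i ∈ A, c i ^ d) = ∑ i ∈ B, c i ^ d := by
      have h := hpow d (Finset.mem_Icc.mpr ⟨hd1, hd2⟩)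
      have := (ZMod.natCast_eq_natCast_iff _ _ _).mpr h
      push_cast at this
      exact this
    have h1 : (∑ i ∈ A \ B, c i ^ d) + ∑ i ∈ A ∩ B, c i ^ d = ∑ i ∈ A, c i ^ d := by
      rw [← Finset.sdiff_inter_self_left A B]
      exact Finset.sum_sdiff Finset.inter_subset_left
    have h2 : (∑ i ∈ B \ A, c i ^ d) + ∑ i ∈ A ∩ B, c i ^ d = ∑ i ∈ B, c i ^ d := by
      rw [← Finset.sdiff_inter_self_right B A]
      exact Finset.sum_sdiff Finset.inter_subset_right
    have := h1.trans (hAB'.trans h2.symm)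
    exact add_right_cancel this
  -- index the symmetric differences by Fin k
  let e1 : Fin k ≃ {x // x ∈ A \ B} := (Finset.equivFinOfCardEq hABk).symm
  let e2 : Fin k ≃ {x // x ∈ B \ A} := (Finset.equivFinOfCardEq hBAk).symm
  set f : Fin k → ZMod n := fun i => c (e1 i : ℕ) with hf
  set g : Fin k → ZMod n := fun i => c (e2 i : ℕ) with hg
  have hsumf : ∀ d : ℕ, (∑ i, f i ^ d) = ∑ x ∈ A \ B, c x ^ d := by
    intro d
    rw [← Finset.sum_attach (A \ B) (fun x => c x ^ d)]
    exact Fintype.sum_equiv e1 _ _ (fun i => rfl)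
  have hsumg : ∀ d : ℕ, (∑ i, g i ^ d) = ∑ x ∈ B \ A, c x ^ d := by
    intro d
    rw [← Finset.sum_attach (B \ A) (fun x => c x ^ d)]
    exact Fintype.sum_equiv e2 _ _ (fun i => rfl)
  have hchar : ∀ d : ℕ, 0 < d → d ≤ k → (d : ZMod n) ≠ 0 := by
    intro d hd1 hd2 h0
    have := (ZMod.natCast_eq_zero_iff _ _).mp h0
    have := Nat.le_of_dvd hd1 this
    omega
  have hmain := newton_aux k f g hchar (fun d hd1 hd2 => by
    rw [hsumf, hsumg]; exact hps d hd1 hd2)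
  -- derive a contradiction
  have hne : (A \ B).Nonempty := Finset.card_pos.mp (by omega)
  obtain ⟨a, ha⟩ := hne
  have hmem : c a ∈ Multiset.map f Finset.univ.val := by
    refine Multiset.mem_map.mpr ⟨e1.symm ⟨a, ha⟩, ?_, ?_⟩
    · simp
    · simp [hf]
  rw [hmain] at hmem
  obtain ⟨i, _, hi⟩ := Multiset.mem_map.mp hmem
  have hb : (e2 i : ℕ) ∈ B \ A := (e2 i).2
  have hba : (e2 i : ℕ) = a := by
    refine hinj _ ?_ _ ?_ hi
    · exact hB (Finset.mem_sdiff.mp hb).1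
    · exact hA (Finset.mem_sdiff.mp ha).1
  rw [hba] at hb
  exact (Finset.mem_sdiff.mp hb).2 (Finset.mem_sdiff.mp ha).1
end

section
/- Let k ≥ 1 and let B_0 be a family of subsets of [n], all of size ≥ n/2 - n^{2/3} and all of size congruent to a fixed residue mod k, with |A \ B| ≠ k for all A, B ∈ B_0. Construct a random increasing sequence C_0 ⊂ C_1 ⊂ ... where C_{i+1} \ C_i has size k, via a uniformly random permutation (C_i = {σ(1),...,σ(ik)} ∪ F for a fixed-size random final block F). Then conditioned on C_{i'+1},...,C_i, the probability that C_{i'} ∈ B_0 is at most k/((i'+1)k) when (i'+1)k + n/3 ≥ n/2 - n^{2/3}. -/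
lemma aux_choose_id (m k : ℕ) (hm : 0 < m) (hk : 0 < k) :
    m * (m - 1).choose (k - 1) = m.choose k * k := by
  obtain ⟨m', rfl⟩ : ∃ m', m = m' + 1 := ⟨m - 1, by omega⟩
  obtain ⟨k', rfl⟩ : ∃ k', k = k' + 1 := ⟨k - 1, by omega⟩
  simpa using Nat.add_one_mul_choose_eq m' k'

theorem stmt_18 (n k : ℕ) (hk : 1 ≤ k) (l : ℕ)
    (ℬ₀ : Finset (Finset (Fin n)))
    (hsize : ∀ A ∈ ℬ₀, (n : ℝ) / 2 - (n : ℝ) ^ ((2 : ℝ) / 3) ≤ A.card)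
    (hcong : ∀ A ∈ ℬ₀, A.card % k = l % k)
    (hdiff : ∀ A ∈ ℬ₀, ∀ B ∈ ℬ₀, (A \ B).card ≠ k)
    (i' : ℕ) (C R : Finset (Fin n)) (hR : R ⊆ C)
    (hRcard : R.card = (i' + 1) * k)
    (hcond : (n : ℝ) / 2 - (n : ℝ) ^ ((2 : ℝ) / 3) ≤ ((i' + 1) * k : ℕ) + (n : ℝ) / 3) :
    (((R.powersetCard k).filter (fun E => C \ E ∈ ℬ₀)).card : ℝ)
        / (R.card.choose k : ℝ)
      ≤ (k : ℝ) / ((i' + 1) * k : ℕ) := by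
  set m := R.card with hm
  set 𝒮 := (R.powersetCard k).filter (fun E => C \ E ∈ ℬ₀) with h𝒮
  have hkm : k ≤ m := by
    rw [hRcard]; exact Nat.le_mul_of_pos_left k (Nat.succ_pos i')
  -- members of 𝒮 pairwise intersect
  have hint : ∀ E ∈ 𝒮, ∀ E' ∈ 𝒮, ¬ Disjoint E E' := by
    intro E hE E' hE' hdis
    rw [h𝒮, Finset.mem_filter, Finset.mem_powersetCard] at hE hE'
    obtain ⟨⟨hER, hEk⟩, hEB⟩ := hE
    obtain ⟨⟨hER', hEk'⟩, hEB'⟩ := hE'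
    apply hdiff _ hEB _ hEB'
    have : (C \ E) \ (C \ E') = E' := by
      ext x
      simp only [Finset.mem_sdiff]
      constructor
      · rintro ⟨⟨hxC, hxE⟩, hx⟩
        by_contra hxE'
        exact hx ⟨hxC, hxE'⟩
      · intro hxE'
        refine ⟨⟨hR (hER' hxE'), fun hxE => ?_⟩, fun h => h.2 hxE'⟩
        exact (Finset.disjoint_left.mp hdis) hxE hxE'
    rw [this, hEk']
  -- the key counting bound via Erdős–Ko–Rado
  have hcount : 𝒮.card ≤ (m - 1).choose (k - 1) := by
    rcases Nat.eq_zero_or_pos i' with hi | hi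
    · -- i' = 0 : trivial bound, 𝒮 ⊆ powersetCard k R which is a singleton
      have h1 : 𝒮.card ≤ (R.powersetCard k).card := Finset.card_le_card (Finset.filter_subset _ _)
      have h2 : (R.powersetCard k).card = 1 := by
        rw [Finset.card_powersetCard, ← hm, hRcard, hi, zero_add, one_mul, Nat.choose_self]
      have h3 : (m - 1).choose (k - 1) = 1 := by
        rw [hRcard, hi, zero_add, one_mul, Nat.choose_self]
      omega
    · -- i' ≥ 1 : transfer to Fin m and apply EKR
      have h2k : 2 * k ≤ m := by
        rw [hRcard]
        exact Nat.mul_le_mul_right k (by omega)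
      set f : Fin m ↪ Fin n := (R.orderEmbOfFin rfl).toEmbedding with hf
      have hfR : ∀ y ∈ R, ∃ x, f x = y := by
        intro y hy
        have h := R.range_orderEmbOfFin (rfl : m = R.card)
        have : y ∈ Set.range ⇑(R.orderEmbOfFin (rfl : m = R.card)) := by
          rw [h]; exact hy
        exact this
      set 𝒜 : Finset (Finset (Fin m)) :=
        𝒮.image (fun E => E.preimage f (f.injective.injOn)) with h𝒜
      have himg : ∀ E ∈ 𝒮, Finset.image f (E.preimage f (f.injective.injOn)) = E := by
        intro E hE
        have hER : E ⊆ R := (Finset.mem_powersetCard.mp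
          (Finset.mem_filter.mp hE).1).1
        ext y
        simp only [Finset.mem_image, Finset.mem_preimage]
        constructor
        · rintro ⟨x, hx, rfl⟩; exact hx
        · intro hy
          obtain ⟨x, hx⟩ := hfR y (hER hy)
          exact ⟨x, by rw [hx]; exact hy, hx⟩
      have hcard𝒜 : 𝒜.card = 𝒮.card := by
        apply Finset.card_image_of_injOn
        intro E hE E' hE' hEE'
        have := congrArg (Finset.image ⇑f) hEE'
        simp only at this
        rwa [himg E (Finset.mem_coe.mp hE), himg E' (Finset.mem_coe.mp hE')] at this
      have hsized : (𝒜 : Set (Finset (Fin m))).Sized k := by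
        intro A hA
        rw [Finset.mem_coe, h𝒜, Finset.mem_image] at hA
        obtain ⟨E, hE, rfl⟩ := hA
        have hEk : E.card = k := (Finset.mem_powersetCard.mp
          (Finset.mem_filter.mp hE).1).2
        calc (E.preimage ⇑f (f.injective.injOn)).card
            = (Finset.image ⇑f (E.preimage ⇑f (f.injective.injOn))).card :=
              (Finset.card_image_of_injective _ f.injective).symm
          _ = k := by rw [himg E hE, hEk]
      have hint𝒜 : (𝒜 : Set (Finset (Fin m))).Intersecting := by
        intro A hA B hB hdis
        rw [Finset.mem_coe, h𝒜, Finset.mem_image] at hA hB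
        obtain ⟨E, hE, rfl⟩ := hA
        obtain ⟨E', hE', rfl⟩ := hB
        apply hint E hE E' hE'
        rw [← himg E hE, ← himg E' hE']
        exact (Finset.disjoint_image f.injective).mpr hdis
      have := Finset.erdos_ko_rado hint𝒜 hsized (Nat.le_div_iff_mul_le (by norm_num) |>.mpr
        (by omega))
      omega
  -- arithmetic conclusion
  have hmpos : 0 < m := lt_of_lt_of_le hk hkm
  have hchoosepos : 0 < m.choose k := Nat.choose_pos hkm
  rw [← hRcard]
  rw [div_le_div_iff₀ (by exact_mod_cast hchoosepos) (by exact_mod_cast hmpos)]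
  have key : 𝒮.card * m ≤ k * m.choose k := by
    calc 𝒮.card * m ≤ (m - 1).choose (k - 1) * m := Nat.mul_le_mul_right _ hcount
      _ = k * m.choose k := by
          rw [mul_comm, aux_choose_id m k hmpos hk, mul_comm]
  exact_mod_cast key
end
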